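/- arXiv:1304.0224 — 5 statements merged into one kernel-verified Lean document; each statement's English description precedes it below -/
import Mathlib

section
/- Let V be a left K-vector space over a division ring K with finrank V = 4. For all lines a₁, b₁, c₁, a₂, b₂, c₂ of V the following are equivalent: (i) for every line g there exist lines x_{ij} (i ∈ {1,2}, j ∈ {1,2,3}) such that for each i ∈ {1,2}: (aᵢ,bᵢ,cᵢ) is a T-triple, and for each j ∈ {1,2,3} (second index mod 3): x_{ij} ≃ aᵢ, x_{ij} ≃ bᵢ, x_{ij} ≃ cᵢ, x_{ij} ≃ g and x_{ij} ≠ x_{i,j+1}; and moreover x_{1j} ≃ x_{2j} for each j ∈ {1,2,3}; (ii) (a₁,b₁,c₁) and (a₂,b₂,c₂) are T-triples of the same type. -/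
/-- `a` is a projective line: a submodule of finrank 2. -/
def PLine {K V : Type*} [DivisionRing K] [AddCommGroup V] [Module K V]
    (a : Submodule K V) : Prop := Module.finrank K a = 2

/-- `p` is a projective point: a submodule of finrank 1. -/
def PPoint {K V : Type*} [DivisionRing K] [AddCommGroup V] [Module K V]
    (p : Submodule K V) : Prop := Module.finrank K p = 1

/-- Two lines intersect: they are different and have nontrivial intersection. -/
def PMeets {K V : Type*} [DivisionRing K] [AddCommGroup V] [Module K V]
    (a b : Submodule K V) : Prop := a ≠ b ∧ a ⊓ b ≠ ⊥

/-- `a ≃ b`: the lines intersect or coincide. -/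
def PMeetsOrEq {K V : Type*} [DivisionRing K] [AddCommGroup V] [Module K V]
    (a b : Submodule K V) : Prop := PMeets a b ∨ a = b

/-- The three lines `a, b, c` pass through a common point. -/
def PConcurrent3 {K V : Type*} [DivisionRing K] [AddCommGroup V] [Module K V]
    (a b c : Submodule K V) : Prop :=
  ∃ p : Submodule K V, PPoint p ∧ p ≤ a ∧ p ≤ b ∧ p ≤ c

/-- `(a,b,c)` is a triangle (trilateral): pairwise distinct, pairwise intersecting,
not concurrent lines. -/
def Triangle {K V : Type*} [DivisionRing K] [AddCommGroup V] [Module K V]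
    (a b c : Submodule K V) : Prop :=
  a ≠ b ∧ a ≠ c ∧ b ≠ c ∧ PMeets a b ∧ PMeets a c ∧ PMeets b c ∧ ¬ PConcurrent3 a b c

/-- `(a,b,c)` is a tripod: pairwise distinct concurrent lines not lying in a common plane. -/
def Tripod {K V : Type*} [DivisionRing K] [AddCommGroup V] [Module K V]
    (a b c : Submodule K V) : Prop :=
  a ≠ b ∧ a ≠ c ∧ b ≠ c ∧ PConcurrent3 a b c ∧ a ⊔ b ⊔ c = ⊤

/-- A T-triple is a triangle or a tripod. -/
def TTriple {K V : Type*} [DivisionRing K] [AddCommGroup V] [Module K V]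
    (a b c : Submodule K V) : Prop := Triangle a b c ∨ Tripod a b c

/-- Two T-triples are of the same type. -/
def SameType {K V : Type*} [DivisionRing K] [AddCommGroup V] [Module K V]
    (a b c a' b' c' : Submodule K V) : Prop :=
  (Triangle a b c ∧ Triangle a' b' c') ∨ (Tripod a b c ∧ Tripod a' b' c')

/-- Two T-triples are of opposite type. -/
def OppType {K V : Type*} [DivisionRing K] [AddCommGroup V] [Module K V]
    (a b c a' b' c' : Submodule K V) : Prop :=
  (Triangle a b c ∧ Tripod a' b' c') ∨ (Tripod a b c ∧ Triangle a' b' c')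

open Module Submodule


section Base
variable {K V : Type*} [DivisionRing K] [AddCommGroup V] [Module K V] [FiniteDimensional K V]

theorem fr_sup_inf (s t : Submodule K V) :
    finrank K ↥(s ⊔ t) + finrank K ↥(s ⊓ t) = finrank K ↥s + finrank K ↥t :=
  Submodule.finrank_sup_add_finrank_inf_eq s t

set_option linter.unusedSectionVars false

theorem nebot_iff {s : Submodule K V} : s ≠ ⊥ ↔ 0 < finrank K ↥s := by
  constructor
  · intro h
    have := (Submodule.finrank_eq_zero (R := K) (M := V) (S := s)).not.2 h
    omega
  · intro h hb
    rw [Submodule.finrank_eq_zero.2 hb] at h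
    omega

theorem fr_mono {s t : Submodule K V} (h : s ≤ t) : finrank K ↥s ≤ finrank K ↥t :=
  Submodule.finrank_mono h

theorem fr_le_total (s : Submodule K V) : finrank K ↥s ≤ finrank K V :=
  Submodule.finrank_le s

theorem point_exists {s : Submodule K V} (h : s ≠ ⊥) :
    ∃ p : Submodule K V, finrank K ↥p = 1 ∧ p ≤ s := by
  obtain ⟨u, hu, hne⟩ := Submodule.exists_mem_ne_zero_of_ne_bot h
  exact ⟨K ∙ u, finrank_span_singleton hne, (Submodule.span_singleton_le_iff_mem _ _).2 hu⟩

theorem point_le_point {p q : Submodule K V} (hp : finrank K ↥p = 1) (hq : finrank K ↥q = 1)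
    (h : p ≤ q) : p = q :=
  Submodule.eq_of_le_of_finrank_eq h (hp.trans hq.symm)

/-- a point inside a nonbot intersection forces equality with the inf when inf has rank ≤ 1 -/
theorem point_eq_of_le_of_fr_le {p s : Submodule K V} (hp : finrank K ↥p = 1)
    (hle : p ≤ s) (hs : finrank K ↥s ≤ 1) : p = s :=
  Submodule.eq_of_le_of_finrank_le hle (by omega)

theorem point_repr {p : Submodule K V} (hp : finrank K ↥p = 1) :
    ∃ u : V, u ≠ 0 ∧ p = K ∙ u := by
  have hne : p ≠ ⊥ := by rw [nebot_iff]; omega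
  obtain ⟨u, hu, hne0⟩ := Submodule.exists_mem_ne_zero_of_ne_bot hne
  refine ⟨u, hne0, (point_le_point (finrank_span_singleton hne0) hp
    ((Submodule.span_singleton_le_iff_mem _ _).2 hu)).symm⟩

theorem exists_mem_not_mem {s t : Submodule K V}
    (h : finrank K ↥t < finrank K ↥s) : ∃ u, u ∈ s ∧ u ∉ t := by
  by_contra hc
  push_neg at hc
  exact absurd (fr_mono fun x hx => hc x hx) (by omega)

/-- two distinct points span a line -/
theorem line_of_two_points {p q : Submodule K V} (hp : finrank K ↥p = 1)
    (hq : finrank K ↥q = 1) (hne : p ≠ q) : finrank K ↥(p ⊔ q) = 2 := by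
  have hinf : p ⊓ q = ⊥ := by
    by_contra hb
    obtain ⟨r, hr, hrle⟩ := point_exists hb
    have h1 : r = p := point_eq_of_le_of_fr_le hr (hrle.trans inf_le_left) (by omega)
    have h2 : r = q := point_eq_of_le_of_fr_le hr (hrle.trans inf_le_right) (by omega)
    exact hne (h1 ▸ h2)
  have := fr_sup_inf p q
  rw [hinf] at this
  simp [finrank_bot] at this
  omega

end Base
section Geo
variable {K V : Type*} [DivisionRing K] [AddCommGroup V] [Module K V] [FiniteDimensional K V]

set_option linter.unusedSectionVars false

theorem pmeq_symm {x y : Submodule K V} (h : PMeetsOrEq x y) : PMeetsOrEq y x := by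
  rcases h with ⟨hne, hinf⟩ | rfl
  · exact Or.inl ⟨hne.symm, by rwa [inf_comm]⟩
  · exact Or.inr rfl

theorem point_on_lines_meets {p x y : Submodule K V} (hp : finrank K ↥p = 1)
    (hx : p ≤ x) (hy : p ≤ y) : PMeetsOrEq x y := by
  by_cases h : x = y
  · exact Or.inr h
  · refine Or.inl ⟨h, fun hb => ?_⟩
    have : p ≤ ⊥ := hb ▸ le_inf hx hy
    rw [le_bot_iff] at this
    rw [this, finrank_bot] at hp
    omega

theorem coplanar_meets {x y s : Submodule K V} (hx : PLine x) (hy : PLine y)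
    (hxs : x ≤ s) (hys : y ≤ s) (hs : finrank K ↥s ≤ 3) : PMeetsOrEq x y := by
  by_cases h : x = y
  · exact Or.inr h
  · refine Or.inl ⟨h, ?_⟩
    rw [nebot_iff]
    have h1 := fr_sup_inf x y
    have h2 : finrank K ↥(x ⊔ y) ≤ 3 := le_trans (fr_mono (sup_le hxs hys)) hs
    rw [hx, hy] at h1
    omega

theorem meets_inf_point {x y : Submodule K V} (hx : PLine x) (hy : PLine y)
    (h : PMeets x y) : finrank K ↥(x ⊓ y) = 1 := by
  obtain ⟨hne, hinf⟩ := h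
  have h1 : 0 < finrank K ↥(x ⊓ y) := nebot_iff.1 hinf
  have h2 : finrank K ↥(x ⊓ y) ≤ 2 := hx ▸ fr_mono inf_le_left
  rcases Nat.lt_or_ge (finrank K ↥(x ⊓ y)) 2 with h | h
  · omega
  · exfalso
    have hex : x ⊓ y = x := Submodule.eq_of_le_of_finrank_le inf_le_left (hx ▸ h)
    have hxy : x ≤ y := hex ▸ inf_le_right
    exact hne (Submodule.eq_of_le_of_finrank_eq hxy (hx.trans hy.symm))

theorem line_eq_sup_points {p q x : Submodule K V} (hx : PLine x)
    (hp : finrank K ↥p = 1) (hq : finrank K ↥q = 1) (hne : p ≠ q)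
    (hpx : p ≤ x) (hqx : q ≤ x) : x = p ⊔ q :=
  (Submodule.eq_of_le_of_finrank_eq (sup_le hpx hqx)
    ((line_of_two_points hp hq hne).trans hx.symm)).symm

/-- in a 4-dim space two planes or a line and a plane meet nontrivially -/
theorem inf_nebot_of_fr (hdim : finrank K V = 4) {s t : Submodule K V}
    (h : 4 < finrank K ↥s + finrank K ↥t) : s ⊓ t ≠ ⊥ := by
  rw [nebot_iff]
  have h1 := fr_sup_inf s t
  have h2 : finrank K ↥(s ⊔ t) ≤ 4 := hdim ▸ fr_le_total _
  omega

/-- the pencil of lines through a point inside a plane contains 3 distinct lines -/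
theorem pencil3 {q σ : Submodule K V} (hq : finrank K ↥q = 1)
    (hσ : finrank K ↥σ = 3) (hqσ : q ≤ σ) :
    ∃ x₁ x₂ x₃ : Submodule K V, PLine x₁ ∧ PLine x₂ ∧ PLine x₃ ∧
      x₁ ≤ σ ∧ x₂ ≤ σ ∧ x₃ ≤ σ ∧ q ≤ x₁ ∧ q ≤ x₂ ∧ q ≤ x₃ ∧
      x₁ ≠ x₂ ∧ x₂ ≠ x₃ ∧ x₃ ≠ x₁ := by
  obtain ⟨v, hvσ, hvq⟩ : ∃ v, v ∈ σ ∧ v ∉ q := by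
    have := exists_mem_not_mem (s := σ) (t := q) (by omega)
    simpa using this
  have hv0 : v ≠ 0 := fun h => hvq (h ▸ q.zero_mem)
  have hqv : q ≠ (K ∙ v ):= fun h => hvq (h ▸ Submodule.mem_span_singleton_self v)
  have hfrv : finrank K ↥((K ∙ v)) = 1 := finrank_span_singleton hv0
  have hx1 : finrank K ↥(q ⊔ (K ∙ v)) = 2 := line_of_two_points hq hfrv hqv
  obtain ⟨w, hwσ, hw⟩ : ∃ w, w ∈ σ ∧ w ∉ q ⊔ (K ∙ v ):= by
    have := exists_mem_not_mem (s := σ) (t := q ⊔ (K ∙ v)) (by omega)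
    simpa using this
  have hw0 : w ≠ 0 := fun h => hw (h ▸ Submodule.zero_mem _)
  have hwq : w ∉ q := fun h => hw (Submodule.mem_sup_left h)
  have hqw : q ≠ (K ∙ w ):= fun h => hwq (h ▸ Submodule.mem_span_singleton_self w)
  have hfrw : finrank K ↥((K ∙ w)) = 1 := finrank_span_singleton hw0
  have hx2 : finrank K ↥(q ⊔ (K ∙ w)) = 2 := line_of_two_points hq hfrw hqw
  have hvwq : v + w ∉ q ⊔ (K ∙ v ):= fun h => hw (by
    have hv : v ∈ q ⊔ (K ∙ v ):= Submodule.mem_sup_right (Submodule.mem_span_singleton_self v)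
    simpa using Submodule.sub_mem _ h hv)
  have hvw0 : v + w ≠ 0 := fun h => hvwq (h ▸ Submodule.zero_mem _)
  have hvwq' : v + w ∉ q := fun h => hvwq (Submodule.mem_sup_left h)
  have hqvw : q ≠ (K ∙ (v + w)) := fun h => hvwq' (h ▸ Submodule.mem_span_singleton_self _)
  have hx3 : finrank K ↥(q ⊔ (K ∙ (v + w))) = 2 :=
    line_of_two_points hq (finrank_span_singleton hvw0) hqvw
  refine ⟨q ⊔ (K ∙ v), q ⊔ (K ∙ w), q ⊔ (K ∙ (v + w)), hx1, hx2, hx3,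
    sup_le hqσ ((Submodule.span_singleton_le_iff_mem _ _).2 hvσ),
    sup_le hqσ ((Submodule.span_singleton_le_iff_mem _ _).2 hwσ),
    sup_le hqσ ((Submodule.span_singleton_le_iff_mem _ _).2 (σ.add_mem hvσ hwσ)),
    le_sup_left, le_sup_left, le_sup_left, ?_, ?_, ?_⟩
  · intro h
    exact hw (h ▸ Submodule.mem_sup_right (Submodule.mem_span_singleton_self w))
  · intro h
    have hvw : v + w ∈ q ⊔ (K ∙ w ):= by
      rw [h]; exact Submodule.mem_sup_right (Submodule.mem_span_singleton_self _)
    have hwm : w ∈ q ⊔ (K ∙ w ):= Submodule.mem_sup_right (Submodule.mem_span_singleton_self w)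
    have hvm : v ∈ q ⊔ (K ∙ w ):= by simpa using Submodule.sub_mem _ hvw hwm
    have hle : q ⊔ (K ∙ v )≤ q ⊔ (K ∙ w ):=
      sup_le le_sup_left ((Submodule.span_singleton_le_iff_mem _ _).2 hvm)
    have heq : q ⊔ (K ∙ v )= q ⊔ (K ∙ w ):=
      Submodule.eq_of_le_of_finrank_eq hle (hx1.trans hx2.symm)
    exact hw (heq ▸ Submodule.mem_sup_right (Submodule.mem_span_singleton_self w))
  · intro h
    exact hvwq (h ▸ Submodule.mem_sup_right (Submodule.mem_span_singleton_self _))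

/-- every line contains three distinct points -/
theorem linepoints3 {g : Submodule K V} (hg : PLine g) :
    ∃ p₁ p₂ p₃ : Submodule K V,
      finrank K ↥p₁ = 1 ∧ finrank K ↥p₂ = 1 ∧ finrank K ↥p₃ = 1 ∧
      p₁ ≤ g ∧ p₂ ≤ g ∧ p₃ ≤ g ∧ p₁ ≠ p₂ ∧ p₂ ≠ p₃ ∧ p₃ ≠ p₁ := by
  have hgb : g ≠ ⊥ := by rw [nebot_iff, hg]; omega
  obtain ⟨u, hug, hu0⟩ := Submodule.exists_mem_ne_zero_of_ne_bot hgb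
  have hfu : finrank K ↥((K ∙ u)) = 1 := finrank_span_singleton hu0
  obtain ⟨v, hvg, hv⟩ : ∃ v, v ∈ g ∧ v ∉ (K ∙ u ):= by
    have := exists_mem_not_mem (s := g) (t := (K ∙ u)) (by rw [hg, hfu]; omega)
    simpa using this
  have hv0 : v ≠ 0 := fun h => hv (h ▸ Submodule.zero_mem _)
  have hfv : finrank K ↥((K ∙ v)) = 1 := finrank_span_singleton hv0
  have huv0 : u + v ≠ 0 := fun h => hv (by
    have : v = -u := by linear_combination (norm := abel1) h
    rw [this]
    exact Submodule.neg_mem _ (Submodule.mem_span_singleton_self u))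
  refine ⟨(K ∙ u), (K ∙ v), (K ∙ (u + v)), hfu, hfv, finrank_span_singleton huv0,
    (Submodule.span_singleton_le_iff_mem _ _).2 hug,
    (Submodule.span_singleton_le_iff_mem _ _).2 hvg,
    (Submodule.span_singleton_le_iff_mem _ _).2 (g.add_mem hug hvg), ?_, ?_, ?_⟩
  · intro h
    exact hv (h ▸ Submodule.mem_span_singleton_self v)
  · intro h
    have huvm : u + v ∈ (K ∙ v ):= by rw [h]; exact Submodule.mem_span_singleton_self _
    have hum : u ∈ (K ∙ v ):= by simpa using Submodule.sub_mem _ huvm (Submodule.mem_span_singleton_self v)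
    have : (K ∙ u )= (K ∙ v ):= Submodule.eq_of_le_of_finrank_eq
      ((Submodule.span_singleton_le_iff_mem _ _).2 hum) (hfu.trans hfv.symm)
    exact hv (this ▸ Submodule.mem_span_singleton_self v)
  · intro h
    have : u + v ∈ (K ∙ u ):= h.symm ▸ Submodule.mem_span_singleton_self _
    exact hv (by simpa using Submodule.sub_mem _ this (Submodule.mem_span_singleton_self u))

end Geo
section Geo2
variable {K V : Type*} [DivisionRing K] [AddCommGroup V] [Module K V] [FiniteDimensional K V]

set_option linter.unusedSectionVars false

theorem tri_plane {a b c : Submodule K V} (ha : PLine a) (hb : PLine b) (hc : PLine c)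
    (h : Triangle a b c) : finrank K ↥(a ⊔ b) = 3 ∧ c ≤ a ⊔ b := by
  obtain ⟨hab, hac, hbc, mab, mac, mbc, hnc⟩ := h
  have hiab : finrank K ↥(a ⊓ b) = 1 := meets_inf_point ha hb mab
  have hfr : finrank K ↥(a ⊔ b) = 3 := by
    have := fr_sup_inf a b
    rw [ha, hb, hiab] at this
    omega
  refine ⟨hfr, ?_⟩
  have hiac : finrank K ↥(a ⊓ c) = 1 := meets_inf_point ha hc mac
  have hibc : finrank K ↥(b ⊓ c) = 1 := meets_inf_point hb hc mbc
  have hne : a ⊓ c ≠ b ⊓ c := by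
    intro h
    exact hnc ⟨a ⊓ c, hiac, inf_le_left, h ▸ inf_le_left, inf_le_right⟩
  have hceq : c = (a ⊓ c) ⊔ (b ⊓ c) :=
    line_eq_sup_points hc hiac hibc hne inf_le_right inf_le_right
  rw [hceq]
  exact sup_le (inf_le_left.trans le_sup_left) (inf_le_left.trans le_sup_right)

theorem tri_transversal {a b c x : Submodule K V} (ha : PLine a) (hb : PLine b) (hc : PLine c)
    (hx : PLine x) (h : Triangle a b c)
    (hxa : PMeetsOrEq x a) (hxb : PMeetsOrEq x b) (hxc : PMeetsOrEq x c) :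
    x ≤ a ⊔ b := by
  obtain ⟨hfr, hcle⟩ := tri_plane ha hb hc h
  rcases hxa with hxa | rfl
  rotate_left
  · exact le_sup_left
  rcases hxb with hxb | rfl
  rotate_left
  · exact le_sup_right
  rcases hxc with hxc | rfl
  rotate_left
  · exact hcle
  have h1 : finrank K ↥(x ⊓ a) = 1 := meets_inf_point hx ha hxa
  have h2 : finrank K ↥(x ⊓ b) = 1 := meets_inf_point hx hb hxb
  have h3 : finrank K ↥(x ⊓ c) = 1 := meets_inf_point hx hc hxc
  by_cases h12 : x ⊓ a = x ⊓ b
  · by_cases h13 : x ⊓ a = x ⊓ c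
    · exact absurd ⟨x ⊓ a, h1, inf_le_right, h12 ▸ inf_le_right, h13 ▸ inf_le_right⟩ h.2.2.2.2.2.2
    · have hxeq : x = (x ⊓ a) ⊔ (x ⊓ c) :=
        line_eq_sup_points hx h1 h3 h13 inf_le_left inf_le_left
      rw [hxeq]
      exact sup_le (inf_le_right.trans le_sup_left) (inf_le_right.trans hcle)
  · have hxeq : x = (x ⊓ a) ⊔ (x ⊓ b) :=
      line_eq_sup_points hx h1 h2 h12 inf_le_left inf_le_left
    rw [hxeq]
    exact sup_le (inf_le_right.trans le_sup_left) (inf_le_right.trans le_sup_right)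

theorem trip_vertex {a b c : Submodule K V} (ha : PLine a) (hb : PLine b)
    (h : Tripod a b c) :
    finrank K ↥(a ⊓ b) = 1 ∧ a ⊓ b ≤ c := by
  obtain ⟨hab, hac, hbc, ⟨p, hp, hpa, hpb, hpc⟩, htop⟩ := h
  have hm : PMeets a b := ⟨hab, fun hbot => by
    have hple : p ≤ ⊥ := hbot ▸ le_inf hpa hpb
    rw [le_bot_iff] at hple
    unfold PPoint at hp
    rw [hple, finrank_bot] at hp
    exact absurd hp (by omega)⟩
  have h1 : finrank K ↥(a ⊓ b) = 1 := meets_inf_point ha hb hm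
  have hpeq : p = a ⊓ b := point_eq_of_le_of_fr_le hp (le_inf hpa hpb) (by omega)
  exact ⟨h1, hpeq ▸ hpc⟩

theorem trip_transversal (hdim : finrank K V = 4) {a b c x : Submodule K V}
    (ha : PLine a) (hb : PLine b) (hc : PLine c) (hx : PLine x) (h : Tripod a b c)
    (hxa : PMeetsOrEq x a) (hxb : PMeetsOrEq x b) (hxc : PMeetsOrEq x c) :
    a ⊓ b ≤ x := by
  obtain ⟨hv, hvc⟩ := trip_vertex ha hb h
  rcases hxa with hxa | rfl
  rotate_left
  · exact inf_le_left
  rcases hxb with hxb | rfl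
  rotate_left
  · exact inf_le_right
  rcases hxc with hxc | rfl
  rotate_left
  · exact hvc
  have h1 : finrank K ↥(x ⊓ a) = 1 := meets_inf_point hx ha hxa
  have h2 : finrank K ↥(x ⊓ b) = 1 := meets_inf_point hx hb hxb
  have h3 : finrank K ↥(x ⊓ c) = 1 := meets_inf_point hx hc hxc
  by_cases e1 : x ⊓ a = a ⊓ b
  · exact e1 ▸ inf_le_left
  by_cases e2 : x ⊓ b = a ⊓ b
  · exact e2 ▸ inf_le_left
  by_cases e3 : x ⊓ c = a ⊓ b
  · exact e3 ▸ inf_le_left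
  exfalso
  -- b = (a⊓b) ⊔ (x⊓b), c = (a⊓b) ⊔ (x⊓c), so everything is inside a ⊔ x, of rank 3
  have hbeq : b = (a ⊓ b) ⊔ (x ⊓ b) :=
    line_eq_sup_points hb hv h2 (fun hh => e2 hh.symm) inf_le_right inf_le_right
  have hceq : c = (a ⊓ b) ⊔ (x ⊓ c) :=
    line_eq_sup_points hc hv h3 (fun hh => e3 hh.symm) hvc inf_le_right
  have htop := h.2.2.2.2
  have hle : a ⊔ b ⊔ c ≤ a ⊔ x := by
    refine sup_le (sup_le le_sup_left ?_) ?_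
    · rw [hbeq]
      exact sup_le (inf_le_left.trans le_sup_left) (inf_le_left.trans le_sup_right)
    · rw [hceq]
      exact sup_le (inf_le_left.trans le_sup_left) (inf_le_left.trans le_sup_right)
  rw [htop, top_le_iff] at hle
  have hfr := fr_sup_inf x a
  rw [hx, ha, h1, sup_comm x a, hle] at hfr
  rw [finrank_top, hdim] at hfr
  omega

end Geo2
section Geo3
variable {K V : Type*} [DivisionRing K] [AddCommGroup V] [Module K V] [FiniteDimensional K V]

set_option linter.unusedSectionVars false
set_option maxHeartbeats 1000000

/-- adjoining a point not on `s` raises rank by one -/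
theorem fr_sup_point {s p : Submodule K V} (hp : finrank K ↥p = 1) (hps : ¬ p ≤ s) :
    finrank K ↥(s ⊔ p) = finrank K ↥s + 1 := by
  have hinf : finrank K ↥(s ⊓ p) = 0 := by
    by_contra h0
    have hle : finrank K ↥(s ⊓ p) ≤ 1 := hp ▸ fr_mono inf_le_right
    have heq : s ⊓ p = p := Submodule.eq_of_le_of_finrank_le inf_le_right (by omega)
    exact hps (heq ▸ inf_le_left)
  have := fr_sup_inf s p
  rw [hp, hinf] at this
  omega

/-- a plane containing a given line -/
theorem exists_plane_of_line (hdim : finrank K V = 4) {g : Submodule K V} (hg : PLine g) :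
    ∃ σ : Submodule K V, finrank K ↥σ = 3 ∧ g ≤ σ := by
  obtain ⟨u, -, hu⟩ : ∃ u, u ∈ (⊤ : Submodule K V) ∧ u ∉ g := by
    refine exists_mem_not_mem ?_
    rw [finrank_top, hdim, hg]
    omega
  have hu0 : u ≠ 0 := fun h => hu (h ▸ g.zero_mem)
  have hfr : finrank K ↥(g ⊔ (K ∙ u)) = 3 := by
    rw [fr_sup_point (finrank_span_singleton hu0)
      (fun h => hu (h (Submodule.mem_span_singleton_self u))), hg]
  exact ⟨g ⊔ (K ∙ u), hfr, le_sup_left⟩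

def Good {K V : Type*} [DivisionRing K] [AddCommGroup V] [Module K V]
    (a b c g x : Submodule K V) : Prop :=
  PMeetsOrEq x a ∧ PMeetsOrEq x b ∧ PMeetsOrEq x c ∧ PMeetsOrEq x g

theorem good_of_plane {a b c g x q : Submodule K V} (ha : PLine a) (hb : PLine b) (hc : PLine c)
    (hx : PLine x) (h : Triangle a b c) (hxπ : x ≤ a ⊔ b)
    (hq : finrank K ↥q = 1) (hqx : q ≤ x) (hqg : q ≤ g) : Good a b c g x := by
  obtain ⟨hfr, hcle⟩ := tri_plane ha hb hc h
  exact ⟨coplanar_meets hx ha hxπ le_sup_left (by omega),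
    coplanar_meets hx hb hxπ le_sup_right (by omega),
    coplanar_meets hx hc hxπ hcle (by omega),
    point_on_lines_meets hq hqx hqg⟩

theorem good_of_vertex {a b c g x : Submodule K V} (ha : PLine a) (hb : PLine b)
    (h : Tripod a b c) (hvx : a ⊓ b ≤ x) (hxg : PMeetsOrEq x g) : Good a b c g x := by
  obtain ⟨hv, hvc⟩ := trip_vertex ha hb h
  exact ⟨point_on_lines_meets hv hvx inf_le_left,
    point_on_lines_meets hv hvx inf_le_right,
    point_on_lines_meets hv hvx hvc, hxg⟩

end Geo3
section Geo4
variable {K V : Type*} [DivisionRing K] [AddCommGroup V] [Module K V] [FiniteDimensional K V]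

set_option linter.unusedSectionVars false
set_option maxHeartbeats 1000000

theorem distinct_join {q t t' ℓ : Submodule K V} (hq : finrank K ↥q = 1)
    (ht : finrank K ↥t = 1) (ht' : finrank K ↥t' = 1) (hne : t ≠ t')
    (htℓ : t ≤ ℓ) (ht'ℓ : t' ≤ ℓ) (hℓ : finrank K ↥ℓ = 2) (hqℓ : ¬ q ≤ ℓ) :
    q ⊔ t ≠ q ⊔ t' := by
  intro h
  have hqt : q ≠ t := fun hh => hqℓ (hh ▸ htℓ)
  have h1 : finrank K ↥(q ⊔ t) = 2 := line_of_two_points hq ht hqt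
  have h2 : finrank K ↥(t ⊔ t') = 2 := line_of_two_points ht ht' hne
  have hle : t ⊔ t' ≤ q ⊔ t := sup_le le_sup_right (h ▸ le_sup_right)
  have he1 : t ⊔ t' = q ⊔ t := Submodule.eq_of_le_of_finrank_eq hle (h2.trans h1.symm)
  have he2 : t ⊔ t' = ℓ := Submodule.eq_of_le_of_finrank_eq (sup_le htℓ ht'ℓ) (h2.trans hℓ.symm)
  exact hqℓ (he2 ▸ he1 ▸ le_sup_left)

theorem construct_tri (hdim : finrank K V = 4) {a b c a' b' c' g : Submodule K V}
    (ha : PLine a) (hb : PLine b) (hc : PLine c)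
    (ha' : PLine a') (hb' : PLine b') (hc' : PLine c')
    (hT : Triangle a b c) (hT' : Triangle a' b' c') (hg : PLine g) :
    ∃ x₁ x₂ x₃ y₁ y₂ y₃ : Submodule K V,
      PLine x₁ ∧ PLine x₂ ∧ PLine x₃ ∧ PLine y₁ ∧ PLine y₂ ∧ PLine y₃ ∧
      Good a b c g x₁ ∧ Good a b c g x₂ ∧ Good a b c g x₃ ∧
      Good a' b' c' g y₁ ∧ Good a' b' c' g y₂ ∧ Good a' b' c' g y₃ ∧
      x₁ ≠ x₂ ∧ x₂ ≠ x₃ ∧ x₃ ≠ x₁ ∧ y₁ ≠ y₂ ∧ y₂ ≠ y₃ ∧ y₃ ≠ y₁ ∧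
      PMeetsOrEq x₁ y₁ ∧ PMeetsOrEq x₂ y₂ ∧ PMeetsOrEq x₃ y₃ := by
  have hπ : finrank K ↥(a ⊔ b) = 3 := (tri_plane ha hb hc hT).1
  have hπ' : finrank K ↥(a' ⊔ b') = 3 := (tri_plane ha' hb' hc' hT').1
  obtain ⟨q, hq, hqle⟩ := point_exists (inf_nebot_of_fr hdim (by rw [hg, hπ]; omega)
    : g ⊓ (a ⊔ b) ≠ ⊥)
  obtain ⟨q', hq', hqle'⟩ := point_exists (inf_nebot_of_fr hdim (by rw [hg, hπ']; omega)
    : g ⊓ (a' ⊔ b') ≠ ⊥)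
  have hqg : q ≤ g := hqle.trans inf_le_left
  have hqπ : q ≤ a ⊔ b := hqle.trans inf_le_right
  have hqg' : q' ≤ g := hqle'.trans inf_le_left
  have hqπ' : q' ≤ a' ⊔ b' := hqle'.trans inf_le_right
  by_cases hcase : q ≤ a' ⊔ b'
  · obtain ⟨x₁, x₂, x₃, l1, l2, l3, s1, s2, s3, m1, m2, m3, d1, d2, d3⟩ := pencil3 hq hπ hqπ
    obtain ⟨y₁, y₂, y₃, l1', l2', l3', s1', s2', s3', m1', m2', m3', d1', d2', d3'⟩ :=
      pencil3 hq hπ' hcase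
    exact ⟨x₁, x₂, x₃, y₁, y₂, y₃, l1, l2, l3, l1', l2', l3',
      good_of_plane ha hb hc l1 hT s1 hq m1 hqg,
      good_of_plane ha hb hc l2 hT s2 hq m2 hqg,
      good_of_plane ha hb hc l3 hT s3 hq m3 hqg,
      good_of_plane ha' hb' hc' l1' hT' s1' hq m1' hqg,
      good_of_plane ha' hb' hc' l2' hT' s2' hq m2' hqg,
      good_of_plane ha' hb' hc' l3' hT' s3' hq m3' hqg,
      d1, d2, d3, d1', d2', d3',
      point_on_lines_meets hq m1 m1', point_on_lines_meets hq m2 m2',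
      point_on_lines_meets hq m3 m3'⟩
  by_cases hcase' : q' ≤ a ⊔ b
  · obtain ⟨x₁, x₂, x₃, l1, l2, l3, s1, s2, s3, m1, m2, m3, d1, d2, d3⟩ :=
      pencil3 hq' hπ hcase'
    obtain ⟨y₁, y₂, y₃, l1', l2', l3', s1', s2', s3', m1', m2', m3', d1', d2', d3'⟩ :=
      pencil3 hq' hπ' hqπ'
    exact ⟨x₁, x₂, x₃, y₁, y₂, y₃, l1, l2, l3, l1', l2', l3',
      good_of_plane ha hb hc l1 hT s1 hq' m1 hqg',
      good_of_plane ha hb hc l2 hT s2 hq' m2 hqg',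
      good_of_plane ha hb hc l3 hT s3 hq' m3 hqg',
      good_of_plane ha' hb' hc' l1' hT' s1' hq' m1' hqg',
      good_of_plane ha' hb' hc' l2' hT' s2' hq' m2' hqg',
      good_of_plane ha' hb' hc' l3' hT' s3' hq' m3' hqg',
      d1, d2, d3, d1', d2', d3',
      point_on_lines_meets hq' m1 m1', point_on_lines_meets hq' m2 m2',
      point_on_lines_meets hq' m3 m3'⟩
  -- now the planes are distinct and q ∉ π', q' ∉ π
  have hπne : a ⊔ b ≠ a' ⊔ b' := fun h => hcase (h ▸ hqπ)
  have hsup4 : finrank K ↥((a ⊔ b) ⊔ (a' ⊔ b')) = 4 := by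
    have hle4 : finrank K ↥((a ⊔ b) ⊔ (a' ⊔ b')) ≤ 4 := hdim ▸ fr_le_total _
    rcases Nat.lt_or_ge (finrank K ↥((a ⊔ b) ⊔ (a' ⊔ b'))) 4 with h | h
    · exfalso
      have he : a ⊔ b = (a ⊔ b) ⊔ (a' ⊔ b') :=
        Submodule.eq_of_le_of_finrank_le le_sup_left (by omega)
      exact hπne (Submodule.eq_of_le_of_finrank_eq (he ▸ le_sup_right : a' ⊔ b' ≤ a ⊔ b)
        (hπ'.trans hπ.symm)).symm
    · omega
  have hℓ : finrank K ↥((a ⊔ b) ⊓ (a' ⊔ b')) = 2 := by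
    have := fr_sup_inf (a ⊔ b) (a' ⊔ b')
    rw [hπ, hπ', hsup4] at this
    omega
  obtain ⟨t₁, t₂, t₃, f1, f2, f3, e1, e2, e3, n1, n2, n3⟩ := linepoints3 (g := (a ⊔ b) ⊓ (a' ⊔ b')) hℓ
  have hqℓ : ¬ q ≤ (a ⊔ b) ⊓ (a' ⊔ b') := fun h => hcase (h.trans inf_le_right)
  have hqℓ' : ¬ q' ≤ (a ⊔ b) ⊓ (a' ⊔ b') := fun h => hcase' (h.trans inf_le_left)
  have hqt : ∀ t : Submodule K V, t ≤ (a ⊔ b) ⊓ (a' ⊔ b') → q ≠ t :=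
    fun t htl hh => hqℓ (hh ▸ htl)
  have hqt' : ∀ t : Submodule K V, t ≤ (a ⊔ b) ⊓ (a' ⊔ b') → q' ≠ t :=
    fun t htl hh => hqℓ' (hh ▸ htl)
  have L : ∀ t : Submodule K V, finrank K ↥t = 1 → t ≤ (a ⊔ b) ⊓ (a' ⊔ b') →
      PLine (q ⊔ t) ∧ (q ⊔ t) ≤ a ⊔ b := fun t hft htl =>
    ⟨line_of_two_points hq hft (hqt t htl), sup_le hqπ (htl.trans inf_le_left)⟩
  have L' : ∀ t : Submodule K V, finrank K ↥t = 1 → t ≤ (a ⊔ b) ⊓ (a' ⊔ b') →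
      PLine (q' ⊔ t) ∧ (q' ⊔ t) ≤ a' ⊔ b' := fun t hft htl =>
    ⟨line_of_two_points hq' hft (hqt' t htl), sup_le hqπ' (htl.trans inf_le_right)⟩
  refine ⟨q ⊔ t₁, q ⊔ t₂, q ⊔ t₃, q' ⊔ t₁, q' ⊔ t₂, q' ⊔ t₃,
    (L t₁ f1 e1).1, (L t₂ f2 e2).1, (L t₃ f3 e3).1,
    (L' t₁ f1 e1).1, (L' t₂ f2 e2).1, (L' t₃ f3 e3).1,
    good_of_plane ha hb hc (L t₁ f1 e1).1 hT (L t₁ f1 e1).2 hq le_sup_left hqg,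
    good_of_plane ha hb hc (L t₂ f2 e2).1 hT (L t₂ f2 e2).2 hq le_sup_left hqg,
    good_of_plane ha hb hc (L t₃ f3 e3).1 hT (L t₃ f3 e3).2 hq le_sup_left hqg,
    good_of_plane ha' hb' hc' (L' t₁ f1 e1).1 hT' (L' t₁ f1 e1).2 hq' le_sup_left hqg',
    good_of_plane ha' hb' hc' (L' t₂ f2 e2).1 hT' (L' t₂ f2 e2).2 hq' le_sup_left hqg',
    good_of_plane ha' hb' hc' (L' t₃ f3 e3).1 hT' (L' t₃ f3 e3).2 hq' le_sup_left hqg',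
    distinct_join hq f1 f2 n1 e1 e2 hℓ hqℓ,
    distinct_join hq f2 f3 n2 e2 e3 hℓ hqℓ,
    distinct_join hq f3 f1 n3 e3 e1 hℓ hqℓ,
    distinct_join hq' f1 f2 n1 e1 e2 hℓ hqℓ',
    distinct_join hq' f2 f3 n2 e2 e3 hℓ hqℓ',
    distinct_join hq' f3 f1 n3 e3 e1 hℓ hqℓ',
    point_on_lines_meets f1 le_sup_right le_sup_right,
    point_on_lines_meets f2 le_sup_right le_sup_right,
    point_on_lines_meets f3 le_sup_right le_sup_right⟩

end Geo4
section Geo5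
variable {K V : Type*} [DivisionRing K] [AddCommGroup V] [Module K V] [FiniteDimensional K V]

set_option linter.unusedSectionVars false
set_option maxHeartbeats 1000000

theorem construct_trip (hdim : finrank K V = 4) {a b c a' b' c' g : Submodule K V}
    (ha : PLine a) (hb : PLine b) (hc : PLine c)
    (ha' : PLine a') (hb' : PLine b') (hc' : PLine c')
    (hT : Tripod a b c) (hT' : Tripod a' b' c') (hg : PLine g) :
    ∃ x₁ x₂ x₃ y₁ y₂ y₃ : Submodule K V,
      PLine x₁ ∧ PLine x₂ ∧ PLine x₃ ∧ PLine y₁ ∧ PLine y₂ ∧ PLine y₃ ∧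
      Good a b c g x₁ ∧ Good a b c g x₂ ∧ Good a b c g x₃ ∧
      Good a' b' c' g y₁ ∧ Good a' b' c' g y₂ ∧ Good a' b' c' g y₃ ∧
      x₁ ≠ x₂ ∧ x₂ ≠ x₃ ∧ x₃ ≠ x₁ ∧ y₁ ≠ y₂ ∧ y₂ ≠ y₃ ∧ y₃ ≠ y₁ ∧
      PMeetsOrEq x₁ y₁ ∧ PMeetsOrEq x₂ y₂ ∧ PMeetsOrEq x₃ y₃ := by
  have hv : finrank K ↥(a ⊓ b) = 1 := (trip_vertex ha hb hT).1
  have hv' : finrank K ↥(a' ⊓ b') = 1 := (trip_vertex ha' hb' hT').1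
  -- main coplanar construction: both pencils in a common plane σ containing g
  have main : ∀ σ : Submodule K V, finrank K ↥σ = 3 → g ≤ σ → a ⊓ b ≤ σ → a' ⊓ b' ≤ σ →
      ∃ x₁ x₂ x₃ y₁ y₂ y₃ : Submodule K V,
      PLine x₁ ∧ PLine x₂ ∧ PLine x₃ ∧ PLine y₁ ∧ PLine y₂ ∧ PLine y₃ ∧
      Good a b c g x₁ ∧ Good a b c g x₂ ∧ Good a b c g x₃ ∧
      Good a' b' c' g y₁ ∧ Good a' b' c' g y₂ ∧ Good a' b' c' g y₃ ∧
      x₁ ≠ x₂ ∧ x₂ ≠ x₃ ∧ x₃ ≠ x₁ ∧ y₁ ≠ y₂ ∧ y₂ ≠ y₃ ∧ y₃ ≠ y₁ ∧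
      PMeetsOrEq x₁ y₁ ∧ PMeetsOrEq x₂ y₂ ∧ PMeetsOrEq x₃ y₃ := by
    intro σ hσ hgσ hvσ hvσ'
    obtain ⟨x₁, x₂, x₃, l1, l2, l3, s1, s2, s3, m1, m2, m3, d1, d2, d3⟩ := pencil3 hv hσ hvσ
    obtain ⟨y₁, y₂, y₃, l1', l2', l3', s1', s2', s3', m1', m2', m3', d1', d2', d3'⟩ :=
      pencil3 hv' hσ hvσ'
    exact ⟨x₁, x₂, x₃, y₁, y₂, y₃, l1, l2, l3, l1', l2', l3',
      good_of_vertex ha hb hT m1 (coplanar_meets l1 hg s1 hgσ (by omega)),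
      good_of_vertex ha hb hT m2 (coplanar_meets l2 hg s2 hgσ (by omega)),
      good_of_vertex ha hb hT m3 (coplanar_meets l3 hg s3 hgσ (by omega)),
      good_of_vertex ha' hb' hT' m1' (coplanar_meets l1' hg s1' hgσ (by omega)),
      good_of_vertex ha' hb' hT' m2' (coplanar_meets l2' hg s2' hgσ (by omega)),
      good_of_vertex ha' hb' hT' m3' (coplanar_meets l3' hg s3' hgσ (by omega)),
      d1, d2, d3, d1', d2', d3',
      coplanar_meets l1 l1' s1 s1' (by omega),
      coplanar_meets l2 l2' s2 s2' (by omega),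
      coplanar_meets l3 l3' s3 s3' (by omega)⟩
  by_cases hvg : a ⊓ b ≤ g
  · by_cases hvg' : a' ⊓ b' ≤ g
    · obtain ⟨σ, hσ, hgσ⟩ := exists_plane_of_line hdim hg
      exact main σ hσ hgσ (hvg.trans hgσ) (hvg'.trans hgσ)
    · have hσ : finrank K ↥(g ⊔ (a' ⊓ b')) = 3 := by
        rw [fr_sup_point hv' hvg', hg]
      exact main _ hσ le_sup_left (hvg.trans le_sup_left) le_sup_right
  · by_cases hvg' : a' ⊓ b' ≤ g
    · have hσ : finrank K ↥(g ⊔ (a ⊓ b)) = 3 := by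
        rw [fr_sup_point hv hvg, hg]
      exact main _ hσ le_sup_left le_sup_right (hvg'.trans le_sup_left)
    · -- neither vertex on g : join vertices to three points of g
      obtain ⟨t₁, t₂, t₃, f1, f2, f3, e1, e2, e3, n1, n2, n3⟩ := linepoints3 hg
      have L : ∀ t : Submodule K V, finrank K ↥t = 1 → t ≤ g → PLine ((a ⊓ b) ⊔ t) :=
        fun t hft htl => line_of_two_points hv hft (fun hh => hvg (hh ▸ htl))
      have L' : ∀ t : Submodule K V, finrank K ↥t = 1 → t ≤ g → PLine ((a' ⊓ b') ⊔ t) :=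
        fun t hft htl => line_of_two_points hv' hft (fun hh => hvg' (hh ▸ htl))
      exact ⟨(a ⊓ b) ⊔ t₁, (a ⊓ b) ⊔ t₂, (a ⊓ b) ⊔ t₃,
        (a' ⊓ b') ⊔ t₁, (a' ⊓ b') ⊔ t₂, (a' ⊓ b') ⊔ t₃,
        L t₁ f1 e1, L t₂ f2 e2, L t₃ f3 e3, L' t₁ f1 e1, L' t₂ f2 e2, L' t₃ f3 e3,
        good_of_vertex ha hb hT le_sup_left (point_on_lines_meets f1 le_sup_right e1),
        good_of_vertex ha hb hT le_sup_left (point_on_lines_meets f2 le_sup_right e2),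
        good_of_vertex ha hb hT le_sup_left (point_on_lines_meets f3 le_sup_right e3),
        good_of_vertex ha' hb' hT' le_sup_left (point_on_lines_meets f1 le_sup_right e1),
        good_of_vertex ha' hb' hT' le_sup_left (point_on_lines_meets f2 le_sup_right e2),
        good_of_vertex ha' hb' hT' le_sup_left (point_on_lines_meets f3 le_sup_right e3),
        distinct_join hv f1 f2 n1 e1 e2 hg hvg,
        distinct_join hv f2 f3 n2 e2 e3 hg hvg,
        distinct_join hv f3 f1 n3 e3 e1 hg hvg,
        distinct_join hv' f1 f2 n1 e1 e2 hg hvg',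
        distinct_join hv' f2 f3 n2 e2 e3 hg hvg',
        distinct_join hv' f3 f1 n3 e3 e1 hg hvg',
        point_on_lines_meets f1 le_sup_right le_sup_right,
        point_on_lines_meets f2 le_sup_right le_sup_right,
        point_on_lines_meets f3 le_sup_right le_sup_right⟩

end Geo5
section Geo6
variable {K V : Type*} [DivisionRing K] [AddCommGroup V] [Module K V] [FiniteDimensional K V]

set_option linter.unusedSectionVars false
set_option maxHeartbeats 1000000

theorem exists_not_mem_two {s t : Submodule K V} (hs : s ≠ ⊤) (ht : t ≠ ⊤) :
    ∃ u : V, u ∉ s ∧ u ∉ t := by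
  obtain ⟨x, hx⟩ : ∃ x, x ∉ s := by
    by_contra h
    push_neg at h
    exact hs (Submodule.eq_top_iff'.2 h)
  obtain ⟨y, hy⟩ : ∃ y, y ∉ t := by
    by_contra h
    push_neg at h
    exact ht (Submodule.eq_top_iff'.2 h)
  by_cases hxt : x ∈ t
  · by_cases hys : y ∈ s
    · refine ⟨x + y, fun h => hx ?_, fun h => hy ?_⟩
      · simpa using Submodule.sub_mem _ h hys
      · simpa using Submodule.sub_mem _ h hxt
    · exact ⟨y, hys, hy⟩
  · exact ⟨x, hx, hxt⟩

/-- the bad line for a triangle (plane π = a ⊔ b) and a tripod (vertex p = a' ⊓ b') -/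
theorem mix_contra (hdim : finrank K V = 4) {a b c a' b' c' : Submodule K V}
    (ha : PLine a) (hb : PLine b) (hc : PLine c)
    (ha' : PLine a') (hb' : PLine b') (hc' : PLine c')
    (hT : Triangle a b c) (hP : Tripod a' b' c') :
    ∃ g : Submodule K V, PLine g ∧ ∀ x₁ x₂ x₃ y₁ y₂ y₃ : Submodule K V,
      PLine x₁ → PLine x₂ → PLine x₃ → PLine y₁ → PLine y₂ → PLine y₃ →
      Good a b c g x₁ → Good a b c g x₂ → Good a b c g x₃ →
      Good a' b' c' g y₁ → Good a' b' c' g y₂ → Good a' b' c' g y₃ →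
      x₁ ≠ x₂ → x₂ ≠ x₃ → x₃ ≠ x₁ → y₁ ≠ y₂ → y₂ ≠ y₃ → y₃ ≠ y₁ →
      PMeetsOrEq x₁ y₁ → PMeetsOrEq x₂ y₂ → PMeetsOrEq x₃ y₃ → False := by
  obtain ⟨hπ, hcπ⟩ := tri_plane ha hb hc hT
  have hp : finrank K ↥(a' ⊓ b') = 1 := (trip_vertex ha' hb' hP).1
  -- construct the bad line g
  have hsne : (a ⊔ b) ≠ ⊤ := by
    intro h
    rw [h, finrank_top, hdim] at hπ
    omega
  have htne : (a' ⊓ b') ≠ ⊤ := by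
    intro h
    rw [h, finrank_top, hdim] at hp
    omega
  obtain ⟨u, huπ, hup⟩ := exists_not_mem_two hsne htne
  have hu0 : u ≠ 0 := fun h => huπ (h ▸ Submodule.zero_mem _)
  have hfru : finrank K ↥(K ∙ u) = 1 := finrank_span_singleton hu0
  have hfrup : finrank K ↥((K ∙ u) ⊔ (a' ⊓ b')) = 2 := by
    have hnle : ¬ a' ⊓ b' ≤ (K ∙ u) := by
      intro h
      have : a' ⊓ b' = (K ∙ u) := point_eq_of_le_of_fr_le hp h (by omega)
      exact hup (this ▸ Submodule.mem_span_singleton_self u)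
    rw [fr_sup_point hp hnle, hfru]
  obtain ⟨w, hwπ, hw⟩ : ∃ w, w ∈ a ⊔ b ∧ w ∉ (K ∙ u) ⊔ (a' ⊓ b') := by
    have := exists_mem_not_mem (s := a ⊔ b) (t := (K ∙ u) ⊔ (a' ⊓ b')) (by omega)
    simpa using this
  have hw0 : w ≠ 0 := fun h => hw (h ▸ Submodule.zero_mem _)
  have hfrw : finrank K ↥(K ∙ w) = 1 := finrank_span_singleton hw0
  have huw : (K ∙ u) ≠ (K ∙ w) := by
    intro h
    exact hw (Submodule.mem_sup_left (h ▸ Submodule.mem_span_singleton_self w))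
  set g := (K ∙ u) ⊔ (K ∙ w) with hgdef
  have hg : PLine g := line_of_two_points hfru hfrw huw
  have hgπ : ¬ g ≤ a ⊔ b := fun h => huπ (h (Submodule.mem_sup_left
    (Submodule.mem_span_singleton_self u)))
  have hpg : ¬ a' ⊓ b' ≤ g := by
    intro h
    have hle : (K ∙ u) ⊔ (a' ⊓ b') ≤ g := sup_le le_sup_left h
    have heq : (K ∙ u) ⊔ (a' ⊓ b') = g := Submodule.eq_of_le_of_finrank_le hle (by rw [hg]; omega)
    exact hw (heq ▸ Submodule.mem_sup_right (Submodule.mem_span_singleton_self w))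
  refine ⟨g, hg, ?_⟩
  intro x₁ x₂ x₃ y₁ y₂ y₃ hx1 hx2 hx3 hy1 hy2 hy3 G1 G2 G3 G1' G2' G3'
    d1 d2 d3 d1' d2' d3' M1 M2 M3
  -- the point q = g ⊓ π and plane σ = g ⊔ p and line m = σ ⊓ π
  have hsupgπ : finrank K ↥(g ⊔ (a ⊔ b)) = 4 := by
    have hle4 : finrank K ↥(g ⊔ (a ⊔ b)) ≤ 4 := hdim ▸ fr_le_total _
    rcases Nat.lt_or_ge (finrank K ↥(g ⊔ (a ⊔ b))) 4 with h | h
    · exact absurd (le_sup_left.trans_eq (Submodule.eq_of_le_of_finrank_le le_sup_right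
        (by omega)).symm) hgπ
    · omega
  have hq : finrank K ↥(g ⊓ (a ⊔ b)) = 1 := by
    have := fr_sup_inf g (a ⊔ b)
    rw [hg, hπ, hsupgπ] at this
    omega
  have hσ : finrank K ↥(g ⊔ (a' ⊓ b')) = 3 := by
    rw [fr_sup_point hp hpg, hg]
  have hsupσπ : finrank K ↥((g ⊔ (a' ⊓ b')) ⊔ (a ⊔ b)) = 4 := by
    have h1 : g ⊔ (a ⊔ b) ≤ (g ⊔ (a' ⊓ b')) ⊔ (a ⊔ b) :=
      sup_le (le_sup_left.trans le_sup_left) le_sup_right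
    have h2 : finrank K ↥((g ⊔ (a' ⊓ b')) ⊔ (a ⊔ b)) ≤ 4 := hdim ▸ fr_le_total _
    have h3 := fr_mono h1
    omega
  have hm : finrank K ↥((g ⊔ (a' ⊓ b')) ⊓ (a ⊔ b)) = 2 := by
    have := fr_sup_inf (g ⊔ (a' ⊓ b')) (a ⊔ b)
    rw [hσ, hπ, hsupσπ] at this
    omega
  have hqσ : g ⊓ (a ⊔ b) ≤ g ⊔ (a' ⊓ b') := inf_le_left.trans le_sup_left
  have hqm : g ⊓ (a ⊔ b) ≤ (g ⊔ (a' ⊓ b')) ⊓ (a ⊔ b) := le_inf hqσ inf_le_right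
  have hpq : a' ⊓ b' ≠ g ⊓ (a ⊔ b) := by
    intro h
    exact hpg (h ▸ inf_le_left)
  -- per-pair dichotomy
  have claim : ∀ x y : Submodule K V, PLine x → PLine y → Good a b c g x →
      Good a' b' c' g y → PMeetsOrEq x y →
      x = (g ⊔ (a' ⊓ b')) ⊓ (a ⊔ b) ∨ y = (a' ⊓ b') ⊔ (g ⊓ (a ⊔ b)) := by
    intro x y hx hy Gx Gy Mxy
    obtain ⟨Gxa, Gxb, Gxc, Gxg⟩ := Gx
    obtain ⟨Gya, Gyb, Gyc, Gyg⟩ := Gy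
    have hxπ : x ≤ a ⊔ b := tri_transversal ha hb hc hx hT Gxa Gxb Gxc
    have hpy : a' ⊓ b' ≤ y := trip_transversal hdim ha' hb' hc' hy hP Gya Gyb Gyc
    -- q ≤ x
    have hxg : PMeets x g := by
      rcases Gxg with h | rfl
      · exact h
      · exact absurd hxπ hgπ
    obtain ⟨r, hr, hrle⟩ := point_exists hxg.2
    have hrq : r = g ⊓ (a ⊔ b) :=
      point_eq_of_le_of_fr_le hr (le_inf (hrle.trans inf_le_right) ((hrle.trans inf_le_left).trans hxπ)) (by omega)
    have hqx : g ⊓ (a ⊔ b) ≤ x := hrq ▸ (hrle.trans inf_le_left)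
    -- y ≤ σ
    have hyg : PMeets y g := by
      rcases Gyg with h | rfl
      · exact h
      · exact absurd hpy hpg
    obtain ⟨r', hr', hrle'⟩ := point_exists hyg.2
    have hpr' : a' ⊓ b' ≠ r' := by
      intro h
      exact hpg (h ▸ (hrle'.trans inf_le_right))
    have hyeq : y = (a' ⊓ b') ⊔ r' :=
      line_eq_sup_points hy hp hr' hpr' hpy (hrle'.trans inf_le_left)
    have hyσ : y ≤ g ⊔ (a' ⊓ b') := by
      rw [hyeq]
      exact sup_le le_sup_right ((hrle'.trans inf_le_right).trans le_sup_left)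
    -- dichotomy
    have key : g ⊓ (a ⊔ b) ≤ y → y = (a' ⊓ b') ⊔ (g ⊓ (a ⊔ b)) := fun hqy =>
      line_eq_sup_points hy hp hq hpq hpy hqy
    rcases Mxy with hmeet | rfl
    rotate_left
    · exact Or.inr (key hqx)
    by_cases hxm : x = (g ⊔ (a' ⊓ b')) ⊓ (a ⊔ b)
    · exact Or.inl hxm
    obtain ⟨t, ht, htle⟩ := point_exists hmeet.2
    have htm : t ≤ (g ⊔ (a' ⊓ b')) ⊓ (a ⊔ b) :=
      le_inf ((htle.trans inf_le_right).trans hyσ) ((htle.trans inf_le_left).trans hxπ)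
    have hxminf : finrank K ↥(x ⊓ ((g ⊔ (a' ⊓ b')) ⊓ (a ⊔ b))) ≤ 1 := by
      rcases Nat.lt_or_ge (finrank K ↥(x ⊓ ((g ⊔ (a' ⊓ b')) ⊓ (a ⊔ b)))) 2 with h | h
      · omega
      · exfalso
        have he : x ⊓ ((g ⊔ (a' ⊓ b')) ⊓ (a ⊔ b)) = x :=
          Submodule.eq_of_le_of_finrank_le inf_le_left (by rw [hx]; omega)
        exact hxm (Submodule.eq_of_le_of_finrank_eq (he ▸ inf_le_right) (hx.trans hm.symm))
    have hqinf : g ⊓ (a ⊔ b) = x ⊓ ((g ⊔ (a' ⊓ b')) ⊓ (a ⊔ b)) :=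
      point_eq_of_le_of_fr_le hq (le_inf hqx hqm) hxminf
    have htq : t = g ⊓ (a ⊔ b) := by
      have := point_eq_of_le_of_fr_le ht (le_inf (htle.trans inf_le_left) htm) (hqinf ▸ (by omega))
      rw [this, ← hqinf]
    exact Or.inr (key (htq ▸ (htle.trans inf_le_right)))
  rcases claim x₁ y₁ hx1 hy1 G1 G1' M1 with h1 | h1 <;>
    rcases claim x₂ y₂ hx2 hy2 G2 G2' M2 with h2 | h2 <;>
      rcases claim x₃ y₃ hx3 hy3 G3 G3' M3 with h3 | h3
  · exact d1 (h1.trans h2.symm)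
  · exact d1 (h1.trans h2.symm)
  · exact d3 (h3.trans h1.symm)
  · exact d2' (h2.trans h3.symm)
  · exact d2 (h2.trans h3.symm)
  · exact d3' (h3.trans h1.symm)
  · exact d1' (h1.trans h2.symm)
  · exact d1' (h1.trans h2.symm)

end Geo6
theorem statement6 {K V : Type*} [DivisionRing K] [AddCommGroup V] [Module K V]
    (hdim : Module.finrank K V = 4)
    (a₁ b₁ c₁ a₂ b₂ c₂ : Submodule K V)
    (ha₁ : PLine a₁) (hb₁ : PLine b₁) (hc₁ : PLine c₁)
    (ha₂ : PLine a₂) (hb₂ : PLine b₂) (hc₂ : PLine c₂) :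
    (∀ g : Submodule K V, PLine g →
      ∃ x₁₁ x₁₂ x₁₃ x₂₁ x₂₂ x₂₃ : Submodule K V,
        PLine x₁₁ ∧ PLine x₁₂ ∧ PLine x₁₃ ∧ PLine x₂₁ ∧ PLine x₂₂ ∧ PLine x₂₃ ∧
        TTriple a₁ b₁ c₁ ∧ TTriple a₂ b₂ c₂ ∧
        (PMeetsOrEq x₁₁ a₁ ∧ PMeetsOrEq x₁₁ b₁ ∧ PMeetsOrEq x₁₁ c₁ ∧ PMeetsOrEq x₁₁ g ∧
          x₁₁ ≠ x₁₂) ∧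
        (PMeetsOrEq x₁₂ a₁ ∧ PMeetsOrEq x₁₂ b₁ ∧ PMeetsOrEq x₁₂ c₁ ∧ PMeetsOrEq x₁₂ g ∧
          x₁₂ ≠ x₁₃) ∧
        (PMeetsOrEq x₁₃ a₁ ∧ PMeetsOrEq x₁₃ b₁ ∧ PMeetsOrEq x₁₃ c₁ ∧ PMeetsOrEq x₁₃ g ∧
          x₁₃ ≠ x₁₁) ∧
        (PMeetsOrEq x₂₁ a₂ ∧ PMeetsOrEq x₂₁ b₂ ∧ PMeetsOrEq x₂₁ c₂ ∧ PMeetsOrEq x₂₁ g ∧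
          x₂₁ ≠ x₂₂) ∧
        (PMeetsOrEq x₂₂ a₂ ∧ PMeetsOrEq x₂₂ b₂ ∧ PMeetsOrEq x₂₂ c₂ ∧ PMeetsOrEq x₂₂ g ∧
          x₂₂ ≠ x₂₃) ∧
        (PMeetsOrEq x₂₃ a₂ ∧ PMeetsOrEq x₂₃ b₂ ∧ PMeetsOrEq x₂₃ c₂ ∧ PMeetsOrEq x₂₃ g ∧
          x₂₃ ≠ x₂₁) ∧
        PMeetsOrEq x₁₁ x₂₁ ∧ PMeetsOrEq x₁₂ x₂₂ ∧ PMeetsOrEq x₁₃ x₂₃) ↔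
    SameType a₁ b₁ c₁ a₂ b₂ c₂ := by
  have hfd : FiniteDimensional K V := FiniteDimensional.of_finrank_pos (by rw [hdim]; omega)
  constructor
  · intro H
    obtain ⟨-, -, -, -, -, -, -, -, -, -, -, -, hT1, hT2, -⟩ := H a₁ ha₁
    rcases hT1 with hT1 | hT1 <;> rcases hT2 with hT2 | hT2
    · exact Or.inl ⟨hT1, hT2⟩
    · exfalso
      obtain ⟨g, hg, hbad⟩ := mix_contra hdim ha₁ hb₁ hc₁ ha₂ hb₂ hc₂ hT1 hT2
      obtain ⟨x₁, x₂, x₃, y₁, y₂, y₃, l1, l2, l3, l1', l2', l3', -, -,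
        ⟨p1a, p1b, p1c, p1g, e1⟩, ⟨p2a, p2b, p2c, p2g, e2⟩, ⟨p3a, p3b, p3c, p3g, e3⟩,
        ⟨q1a, q1b, q1c, q1g, f1⟩, ⟨q2a, q2b, q2c, q2g, f2⟩, ⟨q3a, q3b, q3c, q3g, f3⟩,
        M1, M2, M3⟩ := H g hg
      exact hbad x₁ x₂ x₃ y₁ y₂ y₃ l1 l2 l3 l1' l2' l3'
        ⟨p1a, p1b, p1c, p1g⟩ ⟨p2a, p2b, p2c, p2g⟩ ⟨p3a, p3b, p3c, p3g⟩
        ⟨q1a, q1b, q1c, q1g⟩ ⟨q2a, q2b, q2c, q2g⟩ ⟨q3a, q3b, q3c, q3g⟩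
        e1 e2 e3 f1 f2 f3 M1 M2 M3
    · exfalso
      obtain ⟨g, hg, hbad⟩ := mix_contra hdim ha₂ hb₂ hc₂ ha₁ hb₁ hc₁ hT2 hT1
      obtain ⟨x₁, x₂, x₃, y₁, y₂, y₃, l1, l2, l3, l1', l2', l3', -, -,
        ⟨p1a, p1b, p1c, p1g, e1⟩, ⟨p2a, p2b, p2c, p2g, e2⟩, ⟨p3a, p3b, p3c, p3g, e3⟩,
        ⟨q1a, q1b, q1c, q1g, f1⟩, ⟨q2a, q2b, q2c, q2g, f2⟩, ⟨q3a, q3b, q3c, q3g, f3⟩,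
        M1, M2, M3⟩ := H g hg
      exact hbad y₁ y₂ y₃ x₁ x₂ x₃ l1' l2' l3' l1 l2 l3
        ⟨q1a, q1b, q1c, q1g⟩ ⟨q2a, q2b, q2c, q2g⟩ ⟨q3a, q3b, q3c, q3g⟩
        ⟨p1a, p1b, p1c, p1g⟩ ⟨p2a, p2b, p2c, p2g⟩ ⟨p3a, p3b, p3c, p3g⟩
        f1 f2 f3 e1 e2 e3 (pmeq_symm M1) (pmeq_symm M2) (pmeq_symm M3)
    · exact Or.inr ⟨hT1, hT2⟩
  · intro H g hg
    rcases H with ⟨h1, h2⟩ | ⟨h1, h2⟩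
    · obtain ⟨x₁, x₂, x₃, y₁, y₂, y₃, l1, l2, l3, l1', l2', l3',
        ⟨G1a, G1b, G1c, G1g⟩, ⟨G2a, G2b, G2c, G2g⟩, ⟨G3a, G3b, G3c, G3g⟩,
        ⟨H1a, H1b, H1c, H1g⟩, ⟨H2a, H2b, H2c, H2g⟩, ⟨H3a, H3b, H3c, H3g⟩,
        d1, d2, d3, d1', d2', d3', M1, M2, M3⟩ :=
        construct_tri hdim ha₁ hb₁ hc₁ ha₂ hb₂ hc₂ h1 h2 hg
      exact ⟨x₁, x₂, x₃, y₁, y₂, y₃, l1, l2, l3, l1', l2', l3', Or.inl h1, Or.inl h2,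
        ⟨G1a, G1b, G1c, G1g, d1⟩, ⟨G2a, G2b, G2c, G2g, d2⟩, ⟨G3a, G3b, G3c, G3g, d3⟩,
        ⟨H1a, H1b, H1c, H1g, d1'⟩, ⟨H2a, H2b, H2c, H2g, d2'⟩, ⟨H3a, H3b, H3c, H3g, d3'⟩,
        M1, M2, M3⟩
    · obtain ⟨x₁, x₂, x₃, y₁, y₂, y₃, l1, l2, l3, l1', l2', l3',
        ⟨G1a, G1b, G1c, G1g⟩, ⟨G2a, G2b, G2c, G2g⟩, ⟨G3a, G3b, G3c, G3g⟩,
        ⟨H1a, H1b, H1c, H1g⟩, ⟨H2a, H2b, H2c, H2g⟩, ⟨H3a, H3b, H3c, H3g⟩,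
        d1, d2, d3, d1', d2', d3', M1, M2, M3⟩ :=
        construct_trip hdim ha₁ hb₁ hc₁ ha₂ hb₂ hc₂ h1 h2 hg
      exact ⟨x₁, x₂, x₃, y₁, y₂, y₃, l1, l2, l3, l1', l2', l3', Or.inr h1, Or.inr h2,
        ⟨G1a, G1b, G1c, G1g, d1⟩, ⟨G2a, G2b, G2c, G2g, d2⟩, ⟨G3a, G3b, G3c, G3g, d3⟩,
        ⟨H1a, H1b, H1c, H1g, d1'⟩, ⟨H2a, H2b, H2c, H2g, d2'⟩, ⟨H3a, H3b, H3c, H3g, d3'⟩,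
        M1, M2, M3⟩
end

section
/- Let V be a left K-vector space over a division ring K with finrank V = 4. For all lines a, b of V the following are equivalent: (i) for every line g there exist lines x, a₁, a₂, b₁, b₂ such that x ∼ a, x ∼ b, x ≃ g; for each i ∈ {1,2}: (a,aᵢ,x) and (b,bᵢ,x) are T-triples of the same type, and moreover either both are triangles with distinct planes (a ⊔ aᵢ ≠ b ⊔ bᵢ) or both are tripods with distinct vertices (a ⊓ aᵢ ≠ b ⊓ bᵢ); and (a,a₁,x) and (a,a₂,x) are T-triples of opposite type; (ii) a ⊓ b = ⊥ (a and b are skew). -/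
section St9Aux

open Module Submodule

variable {K V : Type*} [DivisionRing K] [AddCommGroup V] [Module K V] [FiniteDimensional K V]

private lemma st9_eq_of_le_rank {p q : Submodule K V} (h : p ≤ q)
    (hr : Module.finrank K q ≤ Module.finrank K p) : p = q :=
  Submodule.eq_of_le_of_finrank_le h hr

private lemma st9_point_le_of_not_le {s t : Submodule K V} (h : ¬ s ≤ t) :
    ∃ P : Submodule K V, Module.finrank K P = 1 ∧ P ≤ s ∧ ¬ P ≤ t := by
  obtain ⟨v, hvs, hvt⟩ := SetLike.not_le_iff_exists.mp h
  have hv0 : v ≠ 0 := fun h0 => hvt (h0 ▸ t.zero_mem)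
  exact ⟨K ∙ v, finrank_span_singleton hv0,
    (Submodule.span_singleton_le_iff_mem _ _).mpr hvs,
    fun hle => hvt (hle (Submodule.mem_span_singleton_self v))⟩

private lemma st9_point_of_ne_bot {s : Submodule K V} (h : s ≠ ⊥) :
    ∃ P : Submodule K V, Module.finrank K P = 1 ∧ P ≤ s := by
  obtain ⟨P, hP, hPs, _⟩ :=
    st9_point_le_of_not_le (fun hl => h (le_bot_iff.mp hl) : ¬ s ≤ (⊥ : Submodule K V))
  exact ⟨P, hP, hPs⟩

private lemma st9_pos {p : Submodule K V} (h : p ≠ ⊥) : 1 ≤ Module.finrank K p := by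
  obtain ⟨P, hP, hPle⟩ := st9_point_of_ne_bot h
  calc 1 = Module.finrank K P := hP.symm
    _ ≤ Module.finrank K p := Submodule.finrank_mono hPle

private lemma st9_ne_bot {p q : Submodule K V} (hP : Module.finrank K p = 1) (hle : p ≤ q) :
    q ≠ ⊥ := by
  intro h
  subst h
  rw [le_bot_iff.mp hle] at hP
  simp at hP

private lemma st9_sup_formula (s t : Submodule K V) :
    Module.finrank K ↥(s ⊔ t) + Module.finrank K ↥(s ⊓ t) =
      Module.finrank K s + Module.finrank K t :=
  Submodule.finrank_sup_add_finrank_inf_eq s t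

private lemma st9_inf_line {a x : Submodule K V} (ha : Module.finrank K a = 2)
    (hx : Module.finrank K x = 2) (hne : a ≠ x) (hm : a ⊓ x ≠ ⊥) :
    Module.finrank K ↥(a ⊓ x) = 1 := by
  have h1 := st9_pos hm
  have h2 : Module.finrank K ↥(a ⊓ x) ≤ 2 := ha ▸ Submodule.finrank_mono inf_le_left
  rcases Nat.lt_or_ge (Module.finrank K ↥(a ⊓ x)) 2 with h | h
  · omega
  · exfalso
    have e1 : a ⊓ x = a := st9_eq_of_le_rank inf_le_left (by omega)
    have hax : a ≤ x := e1 ▸ inf_le_right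
    exact hne (st9_eq_of_le_rank hax (by omega))

private lemma st9_points_span {P Q x : Submodule K V} (hP : Module.finrank K P = 1)
    (hQ : Module.finrank K Q = 1) (hne : P ≠ Q) (hPx : P ≤ x) (hQx : Q ≤ x)
    (hx : Module.finrank K x = 2) : P ⊔ Q = x := by
  have hinf : Module.finrank K ↥(P ⊓ Q) = 0 := by
    by_contra h
    have h1 : 1 ≤ Module.finrank K ↥(P ⊓ Q) := Nat.one_le_iff_ne_zero.mpr h
    have e1 : P ⊓ Q = P := st9_eq_of_le_rank inf_le_left (by omega)
    have e2 : P ⊓ Q = Q := st9_eq_of_le_rank inf_le_right (by omega)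
    exact hne (e1 ▸ e2)
  have hsum := st9_sup_formula P Q
  exact st9_eq_of_le_rank (sup_le hPx hQx) (by omega)

private lemma st9_mk_triangle {a x : Submodule K V} (ha : Module.finrank K a = 2)
    (hx : Module.finrank K x = 2) (hax : a ≠ x) (hm' : a ⊓ x ≠ ⊥) :
    ∃ c : Submodule K V, Module.finrank K c = 2 ∧ Triangle a c x ∧ a ⊔ c = a ⊔ x := by
  have hp : Module.finrank K ↥(a ⊓ x) = 1 := st9_inf_line ha hx hax hm'
  have hnax : ¬ a ≤ x := fun h => hax (st9_eq_of_le_rank h (by omega))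
  have hnxa : ¬ x ≤ a := fun h => hax ((st9_eq_of_le_rank h (by omega)).symm)
  obtain ⟨A, hA, hAa, hAx⟩ := st9_point_le_of_not_le hnax
  obtain ⟨X, hX, hXx, hXa⟩ := st9_point_le_of_not_le hnxa
  have hAX : ¬ A ≤ X := fun h => hAx (h.trans hXx)
  have hinfAX : Module.finrank K ↥(A ⊓ X) = 0 := by
    by_contra h
    have h1 : 1 ≤ Module.finrank K ↥(A ⊓ X) := Nat.one_le_iff_ne_zero.mpr h
    have e1 : A ⊓ X = A := st9_eq_of_le_rank inf_le_left (by omega)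
    exact hAX (e1 ▸ inf_le_right)
  have hsum := st9_sup_formula A X
  have hc : Module.finrank K ↥(A ⊔ X) = 2 := by omega
  have hne_ac : a ≠ A ⊔ X := fun h => hXa (le_sup_right.trans_eq h.symm)
  have hne_cx : A ⊔ X ≠ x := fun h => hAx (le_sup_left.trans_eq h)
  have hnc : ¬ PConcurrent3 a (A ⊔ X) x := by
    rintro ⟨r, hr, hra, hrc, hrx⟩
    have hr1 : Module.finrank K r = 1 := hr
    have hr_eq : r = a ⊓ x := st9_eq_of_le_rank (le_inf hra hrx) (by omega)
    have hpc : a ⊓ x ≤ A ⊔ X := hr_eq ▸ hrc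
    have hpA : a ⊓ x ≠ A := fun h => hAx (h ▸ inf_le_right)
    have hspan : (a ⊓ x) ⊔ A = a := st9_points_span hp hA hpA inf_le_left hAa ha
    have hle : a ≤ A ⊔ X := by
      rw [← hspan]; exact sup_le hpc le_sup_left
    exact hne_ac (st9_eq_of_le_rank hle (by omega))
  refine ⟨A ⊔ X, hc, ⟨hne_ac, hax, hne_cx,
    ⟨hne_ac, st9_ne_bot hA (le_inf hAa le_sup_left)⟩,
    ⟨hax, hm'⟩,
    ⟨hne_cx, st9_ne_bot hX (le_inf le_sup_right hXx)⟩, hnc⟩, ?_⟩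
  have hpX : a ⊓ x ≠ X := fun h => hXa (h ▸ inf_le_left)
  have hxspan : (a ⊓ x) ⊔ X = x := st9_points_span hp hX hpX inf_le_right hXx hx
  apply le_antisymm
  · exact sup_le le_sup_left (sup_le (hAa.trans le_sup_left) (hXx.trans le_sup_right))
  · refine sup_le le_sup_left ?_
    rw [← hxspan]
    exact sup_le (inf_le_left.trans le_sup_left) (le_sup_right.trans le_sup_right)

private lemma st9_mk_tripod (hdim : Module.finrank K V = 4) {a x : Submodule K V}
    (ha : Module.finrank K a = 2) (hx : Module.finrank K x = 2) (hax : a ≠ x)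
    (hm' : a ⊓ x ≠ ⊥) :
    ∃ c : Submodule K V, Module.finrank K c = 2 ∧ Tripod a c x ∧ a ⊓ c = a ⊓ x := by
  have hp : Module.finrank K ↥(a ⊓ x) = 1 := st9_inf_line ha hx hax hm'
  have hsupax := st9_sup_formula a x
  have hEne : ¬ (⊤ : Submodule K V) ≤ a ⊔ x := by
    intro h
    have htop : a ⊔ x = ⊤ := top_le_iff.mp h
    rw [htop, finrank_top] at hsupax
    omega
  obtain ⟨R, hR, _, hRE⟩ := st9_point_le_of_not_le hEne
  have hinfPR : Module.finrank K ↥((a ⊓ x) ⊓ R) = 0 := by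
    by_contra h
    have h1 : 1 ≤ Module.finrank K ↥((a ⊓ x) ⊓ R) := Nat.one_le_iff_ne_zero.mpr h
    have e1 : (a ⊓ x) ⊓ R = R := st9_eq_of_le_rank inf_le_right (by omega)
    exact hRE ((e1 ▸ inf_le_left).trans (inf_le_left.trans le_sup_left))
  have hsumc := st9_sup_formula (a ⊓ x) R
  have hc : Module.finrank K ↥((a ⊓ x) ⊔ R) = 2 := by omega
  have hRa : ¬ R ≤ a := fun h => hRE (h.trans le_sup_left)
  have hRx : ¬ R ≤ x := fun h => hRE (h.trans le_sup_right)
  have hne_ac : a ≠ (a ⊓ x) ⊔ R := fun h => hRa (le_sup_right.trans_eq h.symm)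
  have hne_cx : (a ⊓ x) ⊔ R ≠ x := fun h => hRx (le_sup_right.trans_eq h)
  have hinfER : Module.finrank K ↥((a ⊔ x) ⊓ R) = 0 := by
    by_contra h
    have h1 : 1 ≤ Module.finrank K ↥((a ⊔ x) ⊓ R) := Nat.one_le_iff_ne_zero.mpr h
    have e1 : (a ⊔ x) ⊓ R = R := st9_eq_of_le_rank inf_le_right (by omega)
    exact hRE (e1 ▸ inf_le_left)
  have hsumER := st9_sup_formula (a ⊔ x) R
  have htop : (a ⊔ x) ⊔ R = ⊤ := Submodule.eq_top_of_finrank_eq (by omega)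
  have hsuptop : a ⊔ ((a ⊓ x) ⊔ R) ⊔ x = ⊤ := by
    rw [eq_top_iff, ← htop]
    exact sup_le (sup_le (le_sup_left.trans le_sup_left) le_sup_right)
      ((le_sup_right.trans le_sup_right).trans le_sup_left)
  have hvert : a ⊓ ((a ⊓ x) ⊔ R) = a ⊓ x := by
    have hm2 : a ⊓ ((a ⊓ x) ⊔ R) ≠ ⊥ := st9_ne_bot hp (le_inf inf_le_left le_sup_left)
    have h1 : Module.finrank K ↥(a ⊓ ((a ⊓ x) ⊔ R)) = 1 := st9_inf_line ha hc hne_ac hm2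
    exact (st9_eq_of_le_rank (le_inf inf_le_left le_sup_left) (by omega)).symm
  exact ⟨(a ⊓ x) ⊔ R, hc, ⟨hne_ac, hax, hne_cx,
    ⟨a ⊓ x, hp, inf_le_left, le_sup_left, inf_le_right⟩, hsuptop⟩, hvert⟩

private lemma st9_triangle_plane {a c x : Submodule K V} (ha : Module.finrank K a = 2)
    (hc : Module.finrank K c = 2) (hx : Module.finrank K x = 2) (ht : Triangle a c x) :
    a ⊔ c = a ⊔ x := by
  obtain ⟨hac, hax, hcx, ⟨_, hmac⟩, ⟨_, hmax⟩, ⟨_, hmcx⟩, hnc⟩ := ht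
  have hP : Module.finrank K ↥(a ⊓ x) = 1 := st9_inf_line ha hx hax hmax
  have hQ : Module.finrank K ↥(c ⊓ x) = 1 := st9_inf_line hc hx hcx hmcx
  have hR : Module.finrank K ↥(a ⊓ c) = 1 := st9_inf_line ha hc hac hmac
  have hPQ : a ⊓ x ≠ c ⊓ x := fun h =>
    hnc ⟨a ⊓ x, hP, inf_le_left, h.trans_le inf_le_left, inf_le_right⟩
  have hRQ : a ⊓ c ≠ c ⊓ x := fun h =>
    hnc ⟨a ⊓ c, hR, inf_le_left, inf_le_right, h.trans_le inf_le_right⟩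
  have hxspan : (a ⊓ x) ⊔ (c ⊓ x) = x := st9_points_span hP hQ hPQ inf_le_right inf_le_right hx
  have hcspan : (a ⊓ c) ⊔ (c ⊓ x) = c := st9_points_span hR hQ hRQ inf_le_right inf_le_left hc
  apply le_antisymm
  · refine sup_le le_sup_left ?_
    rw [← hcspan]
    exact sup_le (inf_le_left.trans le_sup_left) (inf_le_right.trans le_sup_right)
  · refine sup_le le_sup_left ?_
    rw [← hxspan]
    exact sup_le (inf_le_left.trans le_sup_left) (inf_le_left.trans le_sup_right)

private lemma st9_tripod_vertex {a c x : Submodule K V} (ha : Module.finrank K a = 2)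
    (hc : Module.finrank K c = 2) (hx : Module.finrank K x = 2) (ht : Tripod a c x) :
    a ⊓ c = a ⊓ x := by
  obtain ⟨hac, hax, _, ⟨p, hp, hpa, hpc, hpx⟩, _⟩ := ht
  have hp1 : Module.finrank K p = 1 := hp
  have h1 : Module.finrank K ↥(a ⊓ c) = 1 :=
    st9_inf_line ha hc hac (st9_ne_bot hp1 (le_inf hpa hpc))
  have h2 : Module.finrank K ↥(a ⊓ x) = 1 :=
    st9_inf_line ha hx hax (st9_ne_bot hp1 (le_inf hpa hpx))
  have e1 : p = a ⊓ c := st9_eq_of_le_rank (le_inf hpa hpc) (by omega)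
  have e2 : p = a ⊓ x := st9_eq_of_le_rank (le_inf hpa hpx) (by omega)
  exact e1 ▸ e2

private lemma st9_not_both {a c x : Submodule K V} (h1 : Triangle a c x) (h2 : Tripod a c x) :
    False :=
  h1.2.2.2.2.2.2 h2.2.2.2.1

private lemma st9_avoid_two {g s t : Submodule K V} (hs : ¬ g ≤ s) (ht : ¬ g ≤ t) :
    ∃ v ∈ g, v ∉ s ∧ v ∉ t := by
  obtain ⟨v, hvg, hvs⟩ := SetLike.not_le_iff_exists.mp hs
  obtain ⟨w, hwg, hwt⟩ := SetLike.not_le_iff_exists.mp ht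
  by_cases hvt : v ∈ t
  · by_cases hws : w ∈ s
    · refine ⟨v + w, add_mem hvg hwg, fun h => hvs ?_, fun h => hwt ?_⟩
      · simpa using sub_mem h hws
      · simpa using sub_mem h hvt
    · exact ⟨w, hwg, hws, hwt⟩
  · exact ⟨v, hvg, hvs, hvt⟩

end St9Aux
theorem statement9 {K V : Type*} [DivisionRing K] [AddCommGroup V] [Module K V]
    (hdim : Module.finrank K V = 4)
    (a b : Submodule K V) (ha : PLine a) (hb : PLine b) :
    (∀ g : Submodule K V, PLine g →
      ∃ x a₁ a₂ b₁ b₂ : Submodule K V,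
        PLine x ∧ PLine a₁ ∧ PLine a₂ ∧ PLine b₁ ∧ PLine b₂ ∧
        PMeets x a ∧ PMeets x b ∧ PMeetsOrEq x g ∧
        (SameType a a₁ x b b₁ x ∧
          ((Triangle a a₁ x ∧ Triangle b b₁ x ∧ a ⊔ a₁ ≠ b ⊔ b₁) ∨
            (Tripod a a₁ x ∧ Tripod b b₁ x ∧ a ⊓ a₁ ≠ b ⊓ b₁))) ∧
        (SameType a a₂ x b b₂ x ∧
          ((Triangle a a₂ x ∧ Triangle b b₂ x ∧ a ⊔ a₂ ≠ b ⊔ b₂) ∨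
            (Tripod a a₂ x ∧ Tripod b b₂ x ∧ a ⊓ a₂ ≠ b ⊓ b₂))) ∧
        OppType a a₁ x a a₂ x) ↔
    a ⊓ b = ⊥ := by
  haveI hfd : FiniteDimensional K V := FiniteDimensional.of_finrank_eq_succ (n := 3) hdim
  have ha' : Module.finrank K a = 2 := ha
  have hb' : Module.finrank K b = 2 := hb
  constructor
  · -- forward direction
    intro H
    by_contra hab
    obtain ⟨x, a₁, a₂, b₁, b₂, hxl, h1l, h2l, h3l, h4l, hxa, hxb, _,
      ⟨_, h1⟩, ⟨_, h2⟩, hopp⟩ := H a ha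
    have hx' : Module.finrank K x = 2 := hxl
    have ha1' : Module.finrank K a₁ = 2 := h1l
    have ha2' : Module.finrank K a₂ = 2 := h2l
    have hb1' : Module.finrank K b₁ = 2 := h3l
    have hb2' : Module.finrank K b₂ = 2 := h4l
    have hax : a ≠ x := fun h => hxa.1 h.symm
    have hbx : b ≠ x := fun h => hxb.1 h.symm
    have hmax : a ⊓ x ≠ ⊥ := by rw [inf_comm]; exact hxa.2
    have hmbx : b ⊓ x ≠ ⊥ := by rw [inf_comm]; exact hxb.2
    have key : a ⊔ x ≠ b ⊔ x ∧ a ⊓ x ≠ b ⊓ x := by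
      rcases hopp with ⟨t1, t2⟩ | ⟨t1, t2⟩
      · constructor
        · rcases h1 with ⟨tra, trb, hne⟩ | ⟨tp, _, _⟩
          · rw [← st9_triangle_plane ha' ha1' hx' tra, ← st9_triangle_plane hb' hb1' hx' trb]
            exact hne
          · exact absurd (st9_not_both t1 tp) (fun h => h)
        · rcases h2 with ⟨tr, _, _⟩ | ⟨tpa, tpb, hne⟩
          · exact absurd (st9_not_both tr t2) (fun h => h)
          · rw [← st9_tripod_vertex ha' ha2' hx' tpa, ← st9_tripod_vertex hb' hb2' hx' tpb]
            exact hne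
      · constructor
        · rcases h2 with ⟨tra, trb, hne⟩ | ⟨tp, _, _⟩
          · rw [← st9_triangle_plane ha' ha2' hx' tra, ← st9_triangle_plane hb' hb2' hx' trb]
            exact hne
          · exact absurd (st9_not_both t2 tp) (fun h => h)
        · rcases h1 with ⟨tr, _, _⟩ | ⟨tpa, tpb, hne⟩
          · exact absurd (st9_not_both tr t1) (fun h => h)
          · rw [← st9_tripod_vertex ha' ha1' hx' tpa, ← st9_tripod_vertex hb' hb1' hx' tpb]
            exact hne
    obtain ⟨hsup, hinf⟩ := key
    have hne_ab : a ≠ b := fun h => hinf (by rw [h])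
    have hrab : Module.finrank K ↥(a ⊓ b) = 1 := st9_inf_line ha' hb' hne_ab hab
    have hP : Module.finrank K ↥(a ⊓ x) = 1 := st9_inf_line ha' hx' hax hmax
    have hQ : Module.finrank K ↥(b ⊓ x) = 1 := st9_inf_line hb' hx' hbx hmbx
    have hxspan : (a ⊓ x) ⊔ (b ⊓ x) = x :=
      st9_points_span hP hQ hinf inf_le_right inf_le_right hx'
    have hxle : x ≤ a ⊔ b := by
      rw [← hxspan]
      exact sup_le (inf_le_left.trans le_sup_left) (inf_le_left.trans le_sup_right)
    have hsum_ab := st9_sup_formula a b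
    have hsum_ax := st9_sup_formula a x
    have hsum_bx := st9_sup_formula b x
    have e1 : a ⊔ x = a ⊔ b := st9_eq_of_le_rank (sup_le le_sup_left hxle) (by omega)
    have e2 : b ⊔ x = a ⊔ b := st9_eq_of_le_rank (sup_le le_sup_right hxle) (by omega)
    exact hsup (e1.trans e2.symm)
  · -- backward direction
    intro hab g hg
    have hg' : Module.finrank K g = 2 := hg
    suffices hx : ∃ x : Submodule K V, Module.finrank K x = 2 ∧ PMeets x a ∧ PMeets x b ∧
        PMeetsOrEq x g by
      obtain ⟨x, hx', hxa, hxb, hxg⟩ := hx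
      have hax : a ≠ x := fun h => hxa.1 h.symm
      have hbx : b ≠ x := fun h => hxb.1 h.symm
      have hmax : a ⊓ x ≠ ⊥ := by rw [inf_comm]; exact hxa.2
      have hmbx : b ⊓ x ≠ ⊥ := by rw [inf_comm]; exact hxb.2
      have hP : Module.finrank K ↥(a ⊓ x) = 1 := st9_inf_line ha' hx' hax hmax
      have hQ : Module.finrank K ↥(b ⊓ x) = 1 := st9_inf_line hb' hx' hbx hmbx
      have hinf : a ⊓ x ≠ b ⊓ x := by
        intro h
        have hle : a ⊓ x ≤ a ⊓ b := le_inf inf_le_left (h.trans_le inf_le_left)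
        rw [hab, le_bot_iff] at hle
        rw [hle] at hP
        simp at hP
      have hab0 : Module.finrank K ↥(a ⊓ b) = 0 := by rw [hab]; simp
      have hsum_ab := st9_sup_formula a b
      have hsum_ax := st9_sup_formula a x
      have hsum_bx := st9_sup_formula b x
      have hsup : a ⊔ x ≠ b ⊔ x := by
        intro h
        have hle : a ⊔ b ≤ a ⊔ x := sup_le le_sup_left (le_sup_left.trans h.ge)
        have := Submodule.finrank_mono hle
        omega
      obtain ⟨a₁, ha1, tri_a, plane_a⟩ := st9_mk_triangle ha' hx' hax hmax
      obtain ⟨b₁, hb1, tri_b, plane_b⟩ := st9_mk_triangle hb' hx' hbx hmbx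
      obtain ⟨a₂, ha2, tp_a, vert_a⟩ := st9_mk_tripod hdim ha' hx' hax hmax
      obtain ⟨b₂, hb2, tp_b, vert_b⟩ := st9_mk_tripod hdim hb' hx' hbx hmbx
      refine ⟨x, a₁, a₂, b₁, b₂, hx', ha1, ha2, hb1, hb2, hxa, hxb, hxg,
        ⟨Or.inl ⟨tri_a, tri_b⟩, Or.inl ⟨tri_a, tri_b, ?_⟩⟩,
        ⟨Or.inr ⟨tp_a, tp_b⟩, Or.inr ⟨tp_a, tp_b, ?_⟩⟩,
        Or.inl ⟨tri_a, tp_a⟩⟩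
      · rw [plane_a, plane_b]; exact hsup
      · rw [vert_a, vert_b]; exact hinf
    -- construct the transversal x
    by_cases hga : g = a
    · -- special case g = a
      obtain ⟨P, hPr, hPa⟩ := st9_point_of_ne_bot
        (show a ≠ ⊥ by intro h; rw [h] at ha'; simp at ha')
      obtain ⟨Q, hQr, hQb⟩ := st9_point_of_ne_bot
        (show b ≠ ⊥ by intro h; rw [h] at hb'; simp at hb')
      have hQa : ¬ Q ≤ a := by
        intro h
        have : Q ≤ a ⊓ b := le_inf h hQb
        rw [hab, le_bot_iff] at this
        rw [this] at hQr; simp at hQr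
      have hPb : ¬ P ≤ b := by
        intro h
        have : P ≤ a ⊓ b := le_inf hPa h
        rw [hab, le_bot_iff] at this
        rw [this] at hPr; simp at hPr
      have hinfPQ : Module.finrank K ↥(P ⊓ Q) = 0 := by
        have : P ⊓ Q ≤ (⊥ : Submodule K V) := (inf_le_inf hPa hQb).trans hab.le
        rw [le_bot_iff.mp this]; simp
      have hsum := st9_sup_formula P Q
      have hxr : Module.finrank K ↥(P ⊔ Q) = 2 := by omega
      have hxna : P ⊔ Q ≠ a := fun h => hQa (le_sup_right.trans_eq h)
      have hxnb : P ⊔ Q ≠ b := fun h => hPb (le_sup_left.trans_eq h)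
      refine ⟨P ⊔ Q, hxr,
        ⟨hxna, st9_ne_bot hPr (le_inf le_sup_left hPa)⟩,
        ⟨hxnb, st9_ne_bot hQr (le_inf le_sup_right hQb)⟩,
        Or.inl ⟨hga ▸ hxna, hga ▸ st9_ne_bot hPr (le_inf le_sup_left hPa)⟩⟩
    · by_cases hgb : g = b
      · -- special case g = b
        obtain ⟨P, hPr, hPa⟩ := st9_point_of_ne_bot
          (show a ≠ ⊥ by intro h; rw [h] at ha'; simp at ha')
        obtain ⟨Q, hQr, hQb⟩ := st9_point_of_ne_bot
          (show b ≠ ⊥ by intro h; rw [h] at hb'; simp at hb')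
        have hQa : ¬ Q ≤ a := by
          intro h
          have : Q ≤ a ⊓ b := le_inf h hQb
          rw [hab, le_bot_iff] at this
          rw [this] at hQr; simp at hQr
        have hPb : ¬ P ≤ b := by
          intro h
          have : P ≤ a ⊓ b := le_inf hPa h
          rw [hab, le_bot_iff] at this
          rw [this] at hPr; simp at hPr
        have hinfPQ : Module.finrank K ↥(P ⊓ Q) = 0 := by
          have : P ⊓ Q ≤ (⊥ : Submodule K V) := (inf_le_inf hPa hQb).trans hab.le
          rw [le_bot_iff.mp this]; simp
        have hsum := st9_sup_formula P Q
        have hxr : Module.finrank K ↥(P ⊔ Q) = 2 := by omega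
        have hxna : P ⊔ Q ≠ a := fun h => hQa (le_sup_right.trans_eq h)
        have hxnb : P ⊔ Q ≠ b := fun h => hPb (le_sup_left.trans_eq h)
        refine ⟨P ⊔ Q, hxr,
          ⟨hxna, st9_ne_bot hPr (le_inf le_sup_left hPa)⟩,
          ⟨hxnb, st9_ne_bot hQr (le_inf le_sup_right hQb)⟩,
          Or.inl ⟨hgb ▸ hxnb, hgb ▸ st9_ne_bot hQr (le_inf le_sup_right hQb)⟩⟩
      · -- generic case : g ≠ a, g ≠ b
        have hgla : ¬ g ≤ a := fun h => hga (st9_eq_of_le_rank h (by omega))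
        have hglb : ¬ g ≤ b := fun h => hgb (st9_eq_of_le_rank h (by omega))
        obtain ⟨v, hvg, hva, hvb⟩ := st9_avoid_two hgla hglb
        have hv0 : v ≠ 0 := fun h => hva (h ▸ a.zero_mem)
        have hPr : Module.finrank K ↥(K ∙ v) = 1 := finrank_span_singleton hv0
        have hPg : (K ∙ v) ≤ g := (Submodule.span_singleton_le_iff_mem _ _).mpr hvg
        have hPa : ¬ (K ∙ v) ≤ a := fun h => hva (h (Submodule.mem_span_singleton_self v))
        have hPb : ¬ (K ∙ v) ≤ b := fun h => hvb (h (Submodule.mem_span_singleton_self v))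
        set P := (K ∙ v) with hPdef
        have hPa0 : Module.finrank K ↥(P ⊓ a) = 0 := by
          by_contra h
          have h1 : 1 ≤ Module.finrank K ↥(P ⊓ a) := Nat.one_le_iff_ne_zero.mpr h
          have e1 : P ⊓ a = P := st9_eq_of_le_rank inf_le_left (by omega)
          exact hPa (e1 ▸ inf_le_right)
        have hsumE := st9_sup_formula P a
        have hE : Module.finrank K ↥(P ⊔ a) = 3 := by omega
        have hsum2 := st9_sup_formula b (P ⊔ a)
        have hle4 : Module.finrank K ↥(b ⊔ (P ⊔ a)) ≤ 4 := hdim ▸ Submodule.finrank_le _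
        have hQex : b ⊓ (P ⊔ a) ≠ ⊥ := by
          intro h
          rw [h] at hsum2
          simp at hsum2
          omega
        obtain ⟨Q, hQr, hQle⟩ := st9_point_of_ne_bot hQex
        have hQb : Q ≤ b := hQle.trans inf_le_left
        have hQE : Q ≤ P ⊔ a := hQle.trans inf_le_right
        have hinfPQ : Module.finrank K ↥(P ⊓ Q) = 0 := by
          by_contra h
          have h1 : 1 ≤ Module.finrank K ↥(P ⊓ Q) := Nat.one_le_iff_ne_zero.mpr h
          have e1 : P ⊓ Q = P := st9_eq_of_le_rank inf_le_left (by omega)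
          exact hPb ((e1 ▸ inf_le_right).trans hQb)
        have hsumx := st9_sup_formula P Q
        have hxr : Module.finrank K ↥(P ⊔ Q) = 2 := by omega
        have hxE : P ⊔ Q ≤ P ⊔ a := sup_le le_sup_left hQE
        have hxna : P ⊔ Q ≠ a := fun h => hPa (le_sup_left.trans_eq h)
        have hxnb : P ⊔ Q ≠ b := fun h => hPb (le_sup_left.trans_eq h)
        have hmxa : (P ⊔ Q) ⊓ a ≠ ⊥ := by
          intro h
          have hsumxa := st9_sup_formula (P ⊔ Q) a
          rw [h] at hsumxa
          simp at hsumxa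
          have hle3 : Module.finrank K ↥((P ⊔ Q) ⊔ a) ≤ 3 :=
            hE ▸ Submodule.finrank_mono (sup_le hxE le_sup_right)
          omega
        refine ⟨P ⊔ Q, hxr,
          ⟨hxna, hmxa⟩,
          ⟨hxnb, st9_ne_bot hQr (le_inf le_sup_right hQb)⟩, ?_⟩
        by_cases hxg : P ⊔ Q = g
        · exact Or.inr hxg
        · exact Or.inl ⟨hxg, st9_ne_bot hPr (le_inf le_sup_left hPg)⟩
end

section
/- Let n ≥ 3, let K be a division ring with at least 4 elements, and let P be an n-dimensional affine space over K. For all lines a₁, a₂, a₃ of P the following are equivalent: (i) for every line g there exists a line h such that g ∼ h and, for every i ∈ {1,2,3} (indices taken mod 3), aᵢ ∼ aᵢ₊₁ and aᵢ ∼ h; (ii) a₁, a₂, a₃ are pairwise distinct and concurrent. -/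
/-- `a` is an affine line: a nonempty affine subspace whose direction has finrank 1. -/
def ALine (K : Type*) {V P : Type*} [DivisionRing K] [AddCommGroup V] [Module K V]
    [AddTorsor V P] (a : AffineSubspace K P) : Prop :=
  (a : Set P).Nonempty ∧ Module.finrank K a.direction = 1

/-- `a` is an affine plane: a nonempty affine subspace whose direction has finrank 2. -/
def APlane (K : Type*) {V P : Type*} [DivisionRing K] [AddCommGroup V] [Module K V]
    [AddTorsor V P] (a : AffineSubspace K P) : Prop :=
  (a : Set P).Nonempty ∧ Module.finrank K a.direction = 2

/-- Two lines intersect: they are different and have a common point. -/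
def AMeets {K V P : Type*} [DivisionRing K] [AddCommGroup V] [Module K V]
    [AddTorsor V P] (a b : AffineSubspace K P) : Prop :=
  a ≠ b ∧ ((a : Set P) ∩ (b : Set P)).Nonempty

/-- `x` meets the lines `y` and `z` in two distinct points. -/
def AMeetsTwo {K V P : Type*} [DivisionRing K] [AddCommGroup V] [Module K V]
    [AddTorsor V P] (x y z : AffineSubspace K P) : Prop :=
  AMeets x y ∧ AMeets x z ∧ x ⊓ y ≠ x ⊓ z

/-! If a₁, a₂, a₃ meet pairwise without being concurrent, they span a plane E. As n ≥ 3 there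
is a line g parallel to a₁ and disjoint from E, while a line meeting all three aᵢ has two
distinct points in E and so lies in E; hence no line h as in (i) meets g.

Conversely, if all aᵢ pass through p, then for a line g pick a point q on no aᵢ such that exactly
one of p, q lies on g: take q on g if p ∉ g, and on a parallel of g otherwise. Such a q exists
because each aᵢ meets that line in at most one point and a line has |K| ≥ 4 points. The line pq
then meets g and every aᵢ without being equal to any of them. -/

open Module AffineSubspace

section

variable {K V P : Type*} [DivisionRing K] [AddCommGroup V] [Module K V] [AddTorsor V P]

private lemma fin_three_eq_or_eq_add_one_or_eq_add_two (i j : Fin 3) :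
    j = i ∨ j = i + 1 ∨ j = i + 2 := by
  revert i j; decide

lemma Cardinal.exists_forall_notMem_of_subsingleton {α : Type*} {m : ℕ} (T : Fin m → Set α)
    (hT : ∀ i, (T i).Subsingleton) (hm : (m : Cardinal) < Cardinal.mk α) :
    ∃ c, ∀ i, c ∉ T i := by
  by_contra! hcover
  have hunion : (⋃ i, T i) = Set.univ := Set.eq_univ_of_forall fun c => Set.mem_iUnion.2 (hcover c)
  refine hm.not_ge ?_
  calc Cardinal.mk α = Cardinal.mk (⋃ i, T i) := by rw [hunion, Cardinal.mk_univ]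
    _ ≤ Cardinal.sum fun i => Cardinal.mk (T i) := by
        simpa only [Cardinal.lift_uzero] using Cardinal.mk_iUnion_le_sum_mk_lift (f := T)
    _ ≤ Cardinal.sum fun _ : Fin m => (1 : Cardinal) :=
        Cardinal.sum_le_sum _ _ fun i => Cardinal.mk_le_one_iff_set_subsingleton.2 (hT i)
    _ = m := by simp

lemma AffineSubspace.ne_top_of_finrank_direction_lt {s : AffineSubspace K P}
    (hs : finrank K s.direction < finrank K V) : s ≠ ⊤ := by
  rintro rfl
  rw [direction_top, finrank_top] at hs
  exact hs.false

lemma aline_affineSpan_pair {p q : P} (hpq : p ≠ q) : ALine K line[K, p, q] :=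
  ⟨⟨p, left_mem_affineSpan_pair K p q⟩, by
    rw [direction_affineSpan, vectorSpan_pair, finrank_span_singleton (vsub_ne_zero.2 hpq)]⟩

lemma exists_aline_disjoint {a s : AffineSubspace K P} (ha : ALine K a) (has : a ≤ s)
    (hs : s ≠ ⊤) : ∃ g : AffineSubspace K P, ALine K g ∧ Disjoint (g : Set P) s := by
  obtain ⟨x, hx⟩ : ∃ x, x ∉ s := by
    by_contra! h
    exact hs (eq_top_iff.2 fun x _ => h x)
  refine ⟨mk' x a.direction, ⟨⟨x, self_mem_mk' x _⟩, by rw [direction_mk']; exact ha.2⟩, ?_⟩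
  exact Set.disjoint_left.2 fun y hyg hys =>
    hx ((vsub_left_mem_direction_iff_mem hys x).1 (direction_le has (mem_mk'.1 hyg)))

namespace ALine

variable {a b s : AffineSubspace K P}

lemma eq_affineSpan_pair (ha : ALine K a) {p q : P} (hp : p ∈ a) (hq : q ∈ a) (hpq : p ≠ q) :
    a = line[K, p, q] := by
  have hle : line[K, p, q] ≤ a := affineSpan_pair_le_of_mem_of_mem hp hq
  have : FiniteDimensional K a.direction := .of_finrank_eq_succ ha.2
  refine (eq_of_direction_eq_of_nonempty_of_le ?_ (aline_affineSpan_pair hpq).1 hle).symm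
  exact Submodule.eq_of_le_of_finrank_eq (direction_le hle)
    (by rw [(aline_affineSpan_pair hpq).2, ha.2])

lemma le_of_mem (ha : ALine K a) {p q : P} (hp : p ∈ a) (hq : q ∈ a) (hpq : p ≠ q)
    (hps : p ∈ s) (hqs : q ∈ s) : a ≤ s :=
  ha.eq_affineSpan_pair hp hq hpq ▸ affineSpan_pair_le_of_mem_of_mem hps hqs

lemma inter_subsingleton_of_not_le (ha : ALine K a) (has : ¬ a ≤ s) :
    ((a : Set P) ∩ s).Subsingleton := fun _ hp _ hq =>
  by_contra fun hpq => has (ha.le_of_mem hp.1 hq.1 hpq hp.2 hq.2)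

lemma inter_subsingleton_of_ne (ha : ALine K a) (hb : ALine K b) (hab : a ≠ b) :
    ((a : Set P) ∩ b).Subsingleton := fun _ hp _ hq =>
  by_contra fun hpq => hab <|
    (ha.eq_affineSpan_pair hp.1 hq.1 hpq).trans (hb.eq_affineSpan_pair hp.2 hq.2 hpq).symm

end ALine

lemma ALine.exists_mem_forall_notMem {g : AffineSubspace K P} (hg : ALine K g) {m : ℕ}
    (hm : (m : Cardinal) < Cardinal.mk K) (b : Fin m → AffineSubspace K P)
    (hb : ∀ i, ALine K (b i)) (hbg : ∀ i, b i ≠ g) : ∃ q ∈ g, ∀ i, q ∉ b i := by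
  obtain ⟨p₀, hp₀⟩ := hg.1
  obtain ⟨v, hv, hv0⟩ := Submodule.exists_mem_ne_zero_of_ne_bot
    (p := g.direction) fun h => by
      have hrank := hg.2
      rw [h] at hrank
      simp at hrank
  set f : K → P := fun c => c • v +ᵥ p₀
  have hfg : ∀ c, f c ∈ g := fun c => vadd_mem_of_mem_direction (Submodule.smul_mem _ c hv) hp₀
  have hf : Function.Injective f := fun c c' h => smul_left_injective K hv0 (vadd_right_cancel _ h)
  obtain ⟨c, hc⟩ := Cardinal.exists_forall_notMem_of_subsingleton (fun i => f ⁻¹' b i)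
    (fun i _ hc _ hc' => hf ((hb i).inter_subsingleton_of_ne hg (hbg i) ⟨hc, hfg _⟩ ⟨hc', hfg _⟩))
    hm
  exact ⟨f c, hfg c, hc⟩

lemma ALine.le_of_forall_meets {ι : Type*} [Nonempty ι] {a : ι → AffineSubspace K P}
    {h s : AffineSubspace K P} (hh : ALine K h) (has : ∀ i, a i ≤ s)
    (hmeet : ∀ i, ((a i : Set P) ∩ h).Nonempty) (hnc : ¬ ∃ p, ∀ i, p ∈ a i) : h ≤ s := by
  by_contra hhs
  choose y hya hyh using hmeet
  obtain ⟨i₀⟩ := ‹Nonempty ι›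
  refine hnc ⟨y i₀, fun i => ?_⟩
  have hyi : y i = y i₀ :=
    hh.inter_subsingleton_of_not_le hhs ⟨hyh i, has i (hya i)⟩ ⟨hyh i₀, has i₀ (hya i₀)⟩
  exact hyi ▸ hya i

lemma exists_finrank_le_two_of_cyclic_meets {a : Fin 3 → AffineSubspace K P}
    (ha : ∀ i, ALine K (a i)) (hmeet : ∀ i, ((a i : Set P) ∩ a (i + 1)).Nonempty)
    (hnc : ¬ ∃ p, ∀ i, p ∈ a i) :
    ∃ s : AffineSubspace K P, finrank K s.direction ≤ 2 ∧ ∀ i, a i ≤ s := by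
  choose x hx hx' using hmeet
  refine ⟨affineSpan K (Set.range x), ?_, fun i => ?_⟩
  · rw [direction_affineSpan]
    exact finrank_vectorSpan_range_le K x rfl
  have hx'' : x (i + 2) ∈ a i := by simpa [add_assoc] using hx' (i + 2)
  have hne : x i ≠ x (i + 2) := fun h => hnc ⟨x i, fun j => by
    rcases fin_three_eq_or_eq_add_one_or_eq_add_two i j with hj | hj | hj <;> rw [hj]
    exacts [hx i, hx' i, h ▸ hx (i + 2)]⟩
  exact (ha i).le_of_mem (hx i) hx'' hne (subset_affineSpan K _ ⟨i, rfl⟩)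
    (subset_affineSpan K _ ⟨i + 2, rfl⟩)

lemma exists_forall_notMem_and_mem_iff {a : Fin 3 → AffineSubspace K P}
    {g : AffineSubspace K P} (hK : (4 : Cardinal) ≤ Cardinal.mk K) (hV : 2 ≤ finrank K V)
    (ha : ∀ i, ALine K (a i)) (hg : ALine K g) {p : P} (hp : ∀ i, p ∈ a i) :
    ∃ q, (∀ i, q ∉ a i) ∧ (q ∈ g ↔ p ∉ g) := by
  have h3 : ((3 : ℕ) : Cardinal) < Cardinal.mk K := lt_of_lt_of_le (by norm_num) hK
  by_cases hpg : p ∈ g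
  · obtain ⟨l, hl, hlg⟩ := exists_aline_disjoint hg le_rfl
      (ne_top_of_finrank_direction_lt (by rw [hg.2]; omega))
    have hal : ∀ i, a i ≠ l := fun i hil =>
      Set.disjoint_left.1 hlg (hil ▸ hp i : p ∈ l) hpg
    obtain ⟨q, hql, hqa⟩ := hl.exists_mem_forall_notMem h3 a ha hal
    exact ⟨q, hqa, iff_of_false (Set.disjoint_left.1 hlg hql) (not_not.2 hpg)⟩
  · obtain ⟨q, hqg, hqa⟩ := hg.exists_mem_forall_notMem h3 a ha fun i hig => hpg (hig ▸ hp i)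
    exact ⟨q, hqa, iff_of_true hqg hpg⟩

end

theorem statement10 {K V P : Type*} [DivisionRing K] [AddCommGroup V] [Module K V]
    [AddTorsor V P] {n : ℕ} (hn : 3 ≤ n)
    (hK : (4 : Cardinal) ≤ Cardinal.mk K)
    (hdim : Module.finrank K V = n)
    (a : Fin 3 → AffineSubspace K P) (ha : ∀ i, ALine K (a i)) :
    (∀ g : AffineSubspace K P, ALine K g → ∃ h : AffineSubspace K P, ALine K h ∧ AMeets g h ∧
        ∀ i : Fin 3, AMeets (a i) (a (i + 1)) ∧ AMeets (a i) h) ↔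
    ((∀ i j : Fin 3, i ≠ j → a i ≠ a j) ∧ ∃ p : P, ∀ i : Fin 3, p ∈ a i) := by
  constructor
  · intro H
    obtain ⟨_, -, -, hcyc⟩ := H (a 0) (ha 0)
    refine ⟨fun i j hij => ?_, ?_⟩
    · rcases fin_three_eq_or_eq_add_one_or_eq_add_two i j with rfl | rfl | rfl
      · exact absurd rfl hij
      · exact (hcyc i).1.1
      · simpa [add_assoc] using ((hcyc (i + 2)).1.1).symm
    by_contra hnc
    obtain ⟨s, hs, has⟩ := exists_finrank_le_two_of_cyclic_meets ha (fun i => (hcyc i).1.2) hnc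
    obtain ⟨g, hg, hgs⟩ := exists_aline_disjoint (ha 0) (has 0)
      (ne_top_of_finrank_direction_lt (by omega))
    obtain ⟨h, hh, ⟨-, t, htg, hth⟩, hmeet⟩ := H g hg
    have hhs : h ≤ s := hh.le_of_forall_meets has (fun i => (hmeet i).2.2) hnc
    exact Set.disjoint_left.1 hgs htg (hhs hth)
  · rintro ⟨hdist, p, hp⟩ g hg
    obtain ⟨q, hqa, hqg⟩ := exists_forall_notMem_and_mem_iff hK (by omega) ha hg hp
    have hpq : p ≠ q := fun h => hqa 0 (h ▸ hp 0)
    have hph := left_mem_affineSpan_pair K p q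
    have hqh := right_mem_affineSpan_pair K p q
    refine ⟨line[K, p, q], aline_affineSpan_pair hpq, ⟨?_, ?_⟩, fun i =>
      ⟨⟨hdist i (i + 1) (by revert i; decide), p, hp i, hp (i + 1)⟩,
        fun h => hqa i (h ▸ hqh), p, hp i, hph⟩⟩
    · rintro rfl
      exact (hqg.1 hqh) hph
    · by_cases hpg : p ∈ g
      exacts [⟨p, hpg, hph⟩, ⟨q, hqg.2 hpg, hqh⟩]
end

section
/- Let n ≥ 3, let K and L be division rings each having at least 4 elements, let P be an n-dimensional affine space over K and Q an n-dimensional affine space over L. Every surjective map f from the set of lines of P onto the set of lines of Q such that a ∼ b implies f(a) ∼ f(b) for all lines a, b of P, is injective. -/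
section Aux

open Module

variable {K V P : Type*} [DivisionRing K] [AddCommGroup V] [Module K V] [AddTorsor V P]

/-- The direction of a line is spanned by the difference of any two of its distinct points. -/
theorem aline_direction_eq [FiniteDimensional K V] {ℓ : AffineSubspace K P} (hℓ : ALine K ℓ)
    {p q : P} (hp : p ∈ ℓ) (hq : q ∈ ℓ) (hpq : p ≠ q) :
    ℓ.direction = Submodule.span K {q -ᵥ p} := by
  have hmem : q -ᵥ p ∈ ℓ.direction := AffineSubspace.vsub_mem_direction hq hp
  have hle : Submodule.span K {q -ᵥ p} ≤ ℓ.direction := by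
    rw [Submodule.span_le, Set.singleton_subset_iff]; exact hmem
  have h1 : finrank K (Submodule.span K ({q -ᵥ p} : Set V)) = 1 :=
    finrank_span_singleton (vsub_ne_zero.mpr hpq.symm)
  exact (Submodule.eq_of_le_of_finrank_le hle (by rw [hℓ.2, h1])).symm

/-- Two lines sharing two distinct points coincide. -/
theorem aline_eq_of_two [FiniteDimensional K V] {ℓ₁ ℓ₂ : AffineSubspace K P}
    (h₁ : ALine K ℓ₁) (h₂ : ALine K ℓ₂) {p q : P} (hp₁ : p ∈ ℓ₁) (hq₁ : q ∈ ℓ₁)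
    (hp₂ : p ∈ ℓ₂) (hq₂ : q ∈ ℓ₂) (hpq : p ≠ q) : ℓ₁ = ℓ₂ :=
  AffineSubspace.ext_of_direction_eq
    (by rw [aline_direction_eq h₁ hp₁ hq₁ hpq, aline_direction_eq h₂ hp₂ hq₂ hpq])
    ⟨p, hp₁, hp₂⟩

/-- Two distinct lines meet in at most one point. -/
theorem aline_pt_unique [FiniteDimensional K V] {ℓ₁ ℓ₂ : AffineSubspace K P}
    (h₁ : ALine K ℓ₁) (h₂ : ALine K ℓ₂) (hne : ℓ₁ ≠ ℓ₂) {s s' : P}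
    (hs₁ : s ∈ ℓ₁) (hs₂ : s ∈ ℓ₂) (hs'₁ : s' ∈ ℓ₁) (hs'₂ : s' ∈ ℓ₂) : s = s' := by
  by_contra h
  exact hne (aline_eq_of_two h₁ h₂ hs₁ hs'₁ hs₂ hs'₂ h)

/-- A line through two distinct points exists. -/
theorem exists_aline_pair {p q : P} (hpq : p ≠ q) :
    ∃ ℓ : AffineSubspace K P, ALine K ℓ ∧ p ∈ ℓ ∧ q ∈ ℓ := by
  refine ⟨affineSpan K {p, q}, ⟨⟨p, left_mem_affineSpan_pair K p q⟩, ?_⟩,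
    left_mem_affineSpan_pair K p q, right_mem_affineSpan_pair K p q⟩
  rw [direction_affineSpan, vectorSpan_pair]
  exact finrank_span_singleton (vsub_ne_zero.mpr hpq)

/-- If a line has two distinct points in the "flat through `s` with direction `U`",
then all its points are there. -/
theorem aline_sub_flat [FiniteDimensional K V] {ℓ : AffineSubspace K P} (hℓ : ALine K ℓ)
    {p q : P} (hp : p ∈ ℓ) (hq : q ∈ ℓ) (hpq : p ≠ q) {s : P} {U : Submodule K V}
    (hpU : p -ᵥ s ∈ U) (hqU : q -ᵥ s ∈ U) : ∀ x ∈ ℓ, x -ᵥ s ∈ U := by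
  intro x hx
  have h1 : x -ᵥ p ∈ ℓ.direction := AffineSubspace.vsub_mem_direction hx hp
  rw [aline_direction_eq hℓ hp hq hpq, Submodule.mem_span_singleton] at h1
  obtain ⟨k, hk⟩ := h1
  have h2 : x -ᵥ s = k • (q -ᵥ p) + (p -ᵥ s) := by rw [hk, vsub_add_vsub_cancel]
  have h3 : q -ᵥ p ∈ U := by
    rw [← vsub_sub_vsub_cancel_right q p s]
    exact U.sub_mem hqU hpU
  rw [h2]
  exact U.add_mem (U.smul_mem k h3) hpU

/-- In dimension ≥ 3 there is a line avoiding a flat of direction-rank ≤ 2. -/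
theorem exists_aline_avoid [FiniteDimensional K V] (h3 : 3 ≤ finrank K V) (s : P)
    (U : Submodule K V) (hU : finrank K U ≤ 2) :
    ∃ ℓ : AffineSubspace K P, ALine K ℓ ∧ ∀ x ∈ ℓ, x -ᵥ s ∉ U := by
  obtain ⟨v₀, hv₀, u, hu⟩ : ∃ v₀ : V, v₀ ≠ 0 ∧ ∃ u : V, ∀ k : K, k • v₀ + u ∉ U := by
    by_cases hbot : U = ⊥
    · haveI : Nontrivial V := Module.nontrivial_of_finrank_pos (R := K) (by omega)
      obtain ⟨v₀, hv₀⟩ := exists_ne (0 : V)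
      have hspan : Submodule.span K ({v₀} : Set V) ≠ ⊤ := by
        intro h
        have h1 := finrank_span_singleton (K := K) hv₀
        rw [h, finrank_top] at h1
        omega
      obtain ⟨u, hu⟩ : ∃ u, u ∉ Submodule.span K ({v₀} : Set V) := by
        by_contra h; push_neg at h
        exact hspan (Submodule.eq_top_iff'.mpr h)
      refine ⟨v₀, hv₀, u, fun k hk => hu ?_⟩
      rw [hbot, Submodule.mem_bot] at hk
      have : u = (-k) • v₀ := by
        rw [neg_smul, eq_neg_iff_add_eq_zero, add_comm]
        exact hk
      rw [this]
      exact Submodule.smul_mem _ _ (Submodule.mem_span_singleton_self v₀)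
    · obtain ⟨v₀, hv₀U, hv₀⟩ := Submodule.exists_mem_ne_zero_of_ne_bot hbot
      have hUtop : U ≠ ⊤ := by
        intro h; rw [h, finrank_top] at hU; omega
      obtain ⟨u, hu⟩ : ∃ u, u ∉ U := by
        by_contra h; push_neg at h; exact hUtop (Submodule.eq_top_iff'.mpr h)
      refine ⟨v₀, hv₀, u, fun k hk => hu ?_⟩
      have h1 := U.sub_mem hk (U.smul_mem k hv₀U)
      simpa using h1
  have hne : (u +ᵥ s : P) ≠ (v₀ + u) +ᵥ s := by
    intro h
    exact hv₀ (by simpa using (vadd_right_cancel s h).symm)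
  obtain ⟨ℓ, hℓ, h1, h2⟩ := exists_aline_pair (K := K) hne
  refine ⟨ℓ, hℓ, fun x hx hxU => ?_⟩
  have hdir : x -ᵥ (u +ᵥ s) ∈ ℓ.direction := AffineSubspace.vsub_mem_direction hx h1
  have hqp : ((v₀ + u) +ᵥ s) -ᵥ (u +ᵥ s) = v₀ := by
    rw [vadd_vsub_vadd_cancel_right, add_sub_cancel_right]
  rw [aline_direction_eq hℓ h1 h2 hne, hqp, Submodule.mem_span_singleton] at hdir
  obtain ⟨k, hk⟩ := hdir
  have hxs : x -ᵥ s = k • v₀ + u := by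
    rw [hk, vsub_vadd_eq_vsub_sub, sub_add_cancel]
  rw [hxs] at hxU
  exact hu k hxU

/-- In dimension ≥ 2 there are two distinct lines through any point. -/
theorem exists_two_alines_through [FiniteDimensional K V] (h2 : 2 ≤ finrank K V) (r : P) :
    ∃ ℓ₁ ℓ₂ : AffineSubspace K P, ALine K ℓ₁ ∧ ALine K ℓ₂ ∧ r ∈ ℓ₁ ∧ r ∈ ℓ₂ ∧ ℓ₁ ≠ ℓ₂ := by
  haveI : Nontrivial V := Module.nontrivial_of_finrank_pos (R := K) (by omega)
  obtain ⟨v₁, hv₁⟩ := exists_ne (0 : V)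
  have hspan : Submodule.span K ({v₁} : Set V) ≠ ⊤ := by
    intro h
    have h1 := finrank_span_singleton (K := K) hv₁
    rw [h, finrank_top] at h1
    omega
  obtain ⟨v₂, hv₂⟩ : ∃ v₂, v₂ ∉ Submodule.span K ({v₁} : Set V) := by
    by_contra h; push_neg at h
    exact hspan (Submodule.eq_top_iff'.mpr h)
  have hvadd : ∀ v : V, v ≠ 0 → r ≠ v +ᵥ r := by
    intro v hv h
    exact hv (vadd_right_cancel r (by rw [zero_vadd, ← h]))
  have hv₂0 : v₂ ≠ 0 := fun h => hv₂ (h ▸ Submodule.zero_mem _)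
  obtain ⟨ℓ₁, hℓ₁, hr₁, hm₁⟩ := exists_aline_pair (K := K) (hvadd v₁ hv₁)
  obtain ⟨ℓ₂, hℓ₂, hr₂, hm₂⟩ := exists_aline_pair (K := K) (hvadd v₂ hv₂0)
  refine ⟨ℓ₁, ℓ₂, hℓ₁, hℓ₂, hr₁, hr₂, ?_⟩
  intro h
  apply hv₂
  have hm₂' : v₂ +ᵥ r ∈ ℓ₁ := by rw [h]; exact hm₂
  have hd : (v₂ +ᵥ r) -ᵥ r ∈ ℓ₁.direction := AffineSubspace.vsub_mem_direction hm₂' hr₁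
  rw [aline_direction_eq hℓ₁ hr₁ hm₁ (hvadd v₁ hv₁), vadd_vsub] at hd
  simpa using hd

end Aux

theorem statement11 {K V P : Type*} [DivisionRing K] [AddCommGroup V] [Module K V]
    [AddTorsor V P]
    {L W Q : Type*} [DivisionRing L] [AddCommGroup W] [Module L W] [AddTorsor W Q]
    {n : ℕ} (hn : 3 ≤ n)
    (hK : (4 : Cardinal) ≤ Cardinal.mk K) (hL : (4 : Cardinal) ≤ Cardinal.mk L)
    (hdimV : Module.finrank K V = n) (hdimW : Module.finrank L W = n)
    (f : {a : AffineSubspace K P // ALine K a} → {b : AffineSubspace L Q // ALine L b})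
    (hsurj : Function.Surjective f)
    (hmeet : ∀ a b : {a : AffineSubspace K P // ALine K a},
      AMeets a.1 b.1 → AMeets (f a).1 (f b).1) :
    Function.Injective f := by
  haveI hFDV : FiniteDimensional K V :=
    Module.finite_of_finrank_pos (by rw [hdimV]; omega)
  haveI hFDW : FiniteDimensional L W :=
    Module.finite_of_finrank_pos (by rw [hdimW]; omega)
  have h2V : 2 ≤ Module.finrank K V := by rw [hdimV]; omega
  have h3W : 3 ≤ Module.finrank L W := by rw [hdimW]; omega
  -- Center lemma: for every point `r` of `P` there is a point of `Q` lying on the image of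
  -- every line through `r`.
  have hcenter : ∀ r : P, ∃ t : Q, ∀ x : {a : AffineSubspace K P // ALine K a},
      r ∈ x.1 → t ∈ (f x).1 := by
    intro r
    obtain ⟨l₁, l₂, hl₁, hl₂, hr₁, hr₂, hne12⟩ := exists_two_alines_through h2V r
    set x₀ : {a : AffineSubspace K P // ALine K a} := ⟨l₁, hl₁⟩ with hx₀def
    set y₀ : {a : AffineSubspace K P // ALine K a} := ⟨l₂, hl₂⟩ with hy₀def
    obtain ⟨hfxy, s, hs₁, hs₂⟩ := hmeet x₀ y₀ ⟨hne12, r, hr₁, hr₂⟩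
    by_cases hall : ∀ z : {a : AffineSubspace K P // ALine K a}, r ∈ z.1 → s ∈ (f z).1
    · exact ⟨s, hall⟩
    push_neg at hall
    obtain ⟨z, hrz, hsz⟩ := hall
    exfalso
    set U : Submodule L W := (f x₀).1.direction ⊔ (f y₀).1.direction with hUdef
    have hUfin : Module.finrank L U ≤ 2 := by
      have h := Submodule.finrank_add_le_finrank_add_finrank
        (f x₀).1.direction (f y₀).1.direction
      rw [(f x₀).2.2, (f y₀).2.2, ← hUdef] at h
      omega
    have hrhox : ∀ x ∈ (f x₀).1, x -ᵥ s ∈ U :=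
      fun x hx => Submodule.mem_sup_left (AffineSubspace.vsub_mem_direction hx hs₁)
    have hrhoy : ∀ x ∈ (f y₀).1, x -ᵥ s ∈ U :=
      fun x hx => Submodule.mem_sup_right (AffineSubspace.vsub_mem_direction hx hs₂)
    have hzx : z.1 ≠ x₀.1 := by
      intro h
      exact hsz (by rw [show z = x₀ from Subtype.ext h]; exact hs₁)
    have hzy : z.1 ≠ y₀.1 := by
      intro h
      exact hsz (by rw [show z = y₀ from Subtype.ext h]; exact hs₂)
    obtain ⟨hfzx, s₁, hs₁z, hs₁x⟩ := hmeet z x₀ ⟨hzx, r, hrz, hr₁⟩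
    obtain ⟨hfzy, s₂, hs₂z, hs₂y⟩ := hmeet z y₀ ⟨hzy, r, hrz, hr₂⟩
    have hs₁s : s₁ ≠ s := fun h => hsz (h ▸ hs₁z)
    have hs₁s₂ : s₁ ≠ s₂ := by
      intro h
      exact hs₁s (aline_pt_unique (f x₀).2 (f y₀).2 hfxy hs₁x
        (by rw [h]; exact hs₂y) hs₁ hs₂)
    have hrhoz : ∀ x ∈ (f z).1, x -ᵥ s ∈ U :=
      aline_sub_flat (f z).2 hs₁z hs₂z hs₁s₂ (hrhox s₁ hs₁x) (hrhoy s₂ hs₂y)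
    -- every line through `r` has image inside the flat (s, U)
    have hstar : ∀ w : {a : AffineSubspace K P // ALine K a}, r ∈ w.1 →
        ∀ x ∈ (f w).1, x -ᵥ s ∈ U := by
      intro w hrw
      by_cases hwx : w.1 = x₀.1
      · rw [show w = x₀ from Subtype.ext hwx]; exact hrhox
      by_cases hwy : w.1 = y₀.1
      · rw [show w = y₀ from Subtype.ext hwy]; exact hrhoy
      by_cases hwz : w.1 = z.1
      · rw [show w = z from Subtype.ext hwz]; exact hrhoz
      obtain ⟨hfwx, p₁, hp₁w, hp₁x⟩ := hmeet w x₀ ⟨hwx, r, hrw, hr₁⟩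
      obtain ⟨hfwy, p₂, hp₂w, hp₂y⟩ := hmeet w y₀ ⟨hwy, r, hrw, hr₂⟩
      obtain ⟨hfwz, p₃, hp₃w, hp₃z⟩ := hmeet w z ⟨hwz, r, hrw, hrz⟩
      by_cases h12 : p₁ = p₂
      · have hp₁s : p₁ = s := aline_pt_unique (f x₀).2 (f y₀).2 hfxy hp₁x
          (by rw [h12]; exact hp₂y) hs₁ hs₂
        by_cases h13 : p₁ = p₃
        · have hssz : s ∈ (f z).1 := by rw [← hp₁s, h13]; exact hp₃z
          exact (hsz hssz).elim
        · exact aline_sub_flat (f w).2 hp₁w hp₃w h13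
            (by rw [hp₁s, vsub_self]; exact U.zero_mem) (hrhoz p₃ hp₃z)
      · exact aline_sub_flat (f w).2 hp₁w hp₂w h12 (hrhox p₁ hp₁x) (hrhoy p₂ hp₂y)
    -- contradiction with surjectivity
    obtain ⟨ℓ0, hℓ0, havoid⟩ := exists_aline_avoid h3W s U hUfin
    obtain ⟨y, hy⟩ := hsurj ⟨ℓ0, hℓ0⟩
    obtain ⟨x, hx, hxU⟩ : ∃ x ∈ (f y).1, x -ᵥ s ∈ U := by
      by_cases hry : r ∈ y.1
      · obtain ⟨x, hx⟩ := (f y).2.1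
        exact ⟨x, hx, hstar y hry x hx⟩
      · obtain ⟨v₁, hv₁⟩ := y.2.1
        have hrv : r ≠ v₁ := fun h => hry (h ▸ hv₁)
        obtain ⟨c, hc, hrc, hvc⟩ := exists_aline_pair (K := K) hrv
        have hcy : c ≠ y.1 := fun h => hry (h ▸ hrc)
        obtain ⟨hfcy, x, hxc, hxy⟩ := hmeet ⟨c, hc⟩ y ⟨hcy, v₁, hvc, hv₁⟩
        exact ⟨x, hxy, hstar ⟨c, hc⟩ hrc x hxc⟩
    rw [hy] at hx
    exact havoid x hx hxU
  -- main argument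
  intro a b hab
  by_contra hne
  have hne1 : a.1 ≠ b.1 := fun h => hne (Subtype.ext h)
  have hdisj : ∀ x, x ∈ a.1 → x ∉ b.1 := by
    intro x hxa hxb
    exact (hmeet a b ⟨hne1, x, hxa, hxb⟩).1 (by rw [hab])
  choose g hg using hcenter
  have hcross : ∀ u ∈ a.1, ∀ w ∈ b.1, g u = g w := by
    intro u hu w hw
    have huw : u ≠ w := fun h => hdisj u hu (h ▸ hw)
    obtain ⟨c, hc, huc, hwc⟩ := exists_aline_pair (K := K) huw
    have hca : c ≠ a.1 := fun h => hdisj w (h ▸ hwc) hw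
    obtain ⟨hfac, -⟩ := hmeet a ⟨c, hc⟩ ⟨fun h => hca h.symm, u, hu, huc⟩
    by_contra hgne
    apply hfac
    have hgw : g w ∈ (f a).1 := by rw [hab]; exact hg w b hw
    exact aline_eq_of_two (f a).2 (f ⟨c, hc⟩).2 (hg u a hu) hgw
      (hg u ⟨c, hc⟩ huc) (hg w ⟨c, hc⟩ hwc) hgne
  obtain ⟨p₀, hp₀⟩ := a.2.1
  have hda : a.1.direction ≠ ⊥ := by
    intro h
    have h1 := a.2.2
    rw [h, finrank_bot] at h1
    omega
  obtain ⟨v, hvd, hv0⟩ := Submodule.exists_mem_ne_zero_of_ne_bot hda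
  have hp₁ : v +ᵥ p₀ ∈ a.1 := AffineSubspace.vadd_mem_of_mem_direction hvd hp₀
  have hp₀₁ : p₀ ≠ v +ᵥ p₀ := by
    intro h
    exact hv0 (vadd_right_cancel p₀ (by rw [zero_vadd, ← h]))
  obtain ⟨q₀, hq₀⟩ := b.2.1
  have ht1 : g q₀ = g p₀ := (hcross p₀ hp₀ q₀ hq₀).symm
  have ht2 : g (v +ᵥ p₀) = g p₀ := by rw [hcross (v +ᵥ p₀) hp₁ q₀ hq₀, ht1]
  have hstep : ∀ u w r : P, g u = g p₀ → g w = g p₀ → u ≠ w → r ≠ u → r ≠ w →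
      (∀ ℓ : AffineSubspace K P, ALine K ℓ → r ∈ ℓ → u ∈ ℓ → w ∉ ℓ) → g r = g p₀ := by
    intro u w r hu hw huw hru hrw hncol
    obtain ⟨ℓ₁, hℓ₁, hrℓ₁, huℓ₁⟩ := exists_aline_pair (K := K) hru
    obtain ⟨ℓ₂, hℓ₂, hrℓ₂, hwℓ₂⟩ := exists_aline_pair (K := K) hrw
    have h12 : ℓ₁ ≠ ℓ₂ := by
      intro h
      exact hncol ℓ₁ hℓ₁ hrℓ₁ huℓ₁ (by rw [h]; exact hwℓ₂)
    obtain ⟨hf12, -⟩ := hmeet ⟨ℓ₁, hℓ₁⟩ ⟨ℓ₂, hℓ₂⟩ ⟨h12, r, hrℓ₁, hrℓ₂⟩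
    by_contra hgr
    apply hf12
    exact aline_eq_of_two (f ⟨ℓ₁, hℓ₁⟩).2 (f ⟨ℓ₂, hℓ₂⟩).2
      (hg r ⟨ℓ₁, hℓ₁⟩ hrℓ₁) (hu ▸ hg u ⟨ℓ₁, hℓ₁⟩ huℓ₁)
      (hg r ⟨ℓ₂, hℓ₂⟩ hrℓ₂) (hw ▸ hg w ⟨ℓ₂, hℓ₂⟩ hwℓ₂) hgr
  have hallg : ∀ r : P, g r = g p₀ := by
    intro r
    by_cases hrq : r = q₀
    · rw [hrq, ht1]
    by_cases hrp0 : r = p₀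
    · rw [hrp0]
    by_cases hrp1 : r = v +ᵥ p₀
    · rw [hrp1, ht2]
    have hp₀q₀ : p₀ ≠ q₀ := fun h => hdisj p₀ hp₀ (h ▸ hq₀)
    have hp₁q₀ : (v +ᵥ p₀) ≠ q₀ := fun h => hdisj _ hp₁ (h ▸ hq₀)
    by_cases hcol : ∃ ℓ : AffineSubspace K P, ALine K ℓ ∧ r ∈ ℓ ∧ p₀ ∈ ℓ ∧ q₀ ∈ ℓ
    · obtain ⟨ℓ, hℓ, hrℓ, hp₀ℓ, hq₀ℓ⟩ := hcol
      refine hstep (v +ᵥ p₀) q₀ r ht2 ht1 hp₁q₀ hrp1 hrq ?_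
      intro ℓ' hℓ' hrℓ' hp₁ℓ' hq₀ℓ'
      have hℓℓ' : ℓ ≠ ℓ' := by
        intro h
        have hp₁ℓ : (v +ᵥ p₀) ∈ ℓ := by rw [h]; exact hp₁ℓ'
        have heqa : ℓ = a.1 := aline_eq_of_two hℓ a.2 hp₀ℓ hp₁ℓ hp₀ hp₁ hp₀₁
        exact hdisj q₀ (heqa ▸ hq₀ℓ) hq₀
      exact hℓℓ' (aline_eq_of_two hℓ hℓ' hrℓ hq₀ℓ hrℓ' hq₀ℓ' hrq)
    · push_neg at hcol
      exact hstep p₀ q₀ r rfl ht1 hp₀q₀ hrp0 hrq hcol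
  obtain ⟨ℓ0, hℓ0, havoid⟩ := exists_aline_avoid h3W (g p₀) (⊥ : Submodule L W)
    (by rw [finrank_bot]; omega)
  obtain ⟨y, hy⟩ := hsurj ⟨ℓ0, hℓ0⟩
  obtain ⟨r₀, hr₀⟩ := y.2.1
  have hgp : g p₀ ∈ (f y).1 := by rw [← hallg r₀]; exact hg r₀ y hr₀
  rw [hy] at hgp
  exact havoid (g p₀) hgp (by rw [vsub_self]; exact Submodule.zero_mem ⊥)
end

section
/- Let n ≥ 3, let K be a division ring with at least 3 elements, let P be an n-dimensional affine space over K, set m = ⌊(n+1)/2⌋, and let a₁, …, a_m be independent lines of P. Let U be the affine span of a₁ ∪ … ∪ a_m and V′ the affine span of a₁ ∪ … ∪ a_{m−1}. Then for every point P₀ ∈ U there exist (not necessarily distinct) lines b₁ and b₂ such that: b₁ contains a point of V′ and a point of a_m which are distinct; b₂ contains a point q₁ of V′ ∪ a_m and a point q₂ of b₁ with q₁ ≠ q₂; and P₀ ∈ b₂. -/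
section Aux

variable {K V P : Type*} [DivisionRing K] [AddCommGroup V] [Module K V] [AddTorsor V P]

/-- A line through two distinct points. -/
lemma aline_span_pair {p q : P} (h : p ≠ q) : ALine K (affineSpan K ({p, q} : Set P)) := by
  refine ⟨⟨p, left_mem_affineSpan_pair K p q⟩, ?_⟩
  rw [direction_affineSpan, vectorSpan_pair]
  exact finrank_span_singleton (vsub_ne_zero.2 h)

/-- finrank of span of a single vector is at most 1. -/
lemma finrank_span_single_le [FiniteDimensional K V] (v : V) :
    Module.finrank K (Submodule.span K ({v} : Set V)) ≤ 1 := by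
  by_cases h : v = 0
  · rw [h, Submodule.span_zero_singleton]
    simp
  · rw [finrank_span_singleton h]

/-- The affine span of the union of `k ≥ 1` lines has direction of finrank at most `2k - 1`. -/
lemma finrank_span_lines_le [FiniteDimensional K V] (a : ℕ → AffineSubspace K P) :
    ∀ k : ℕ, 1 ≤ k → (∀ i ∈ Finset.Icc 1 k, ALine K (a i)) →
      Module.finrank K (affineSpan K (⋃ i ∈ Finset.Icc 1 k, (a i : Set P))).direction ≤
        2 * k - 1 := by
  intro k
  induction k with
  | zero => omega
  | succ k ih =>
    intro _ ha
    rcases Nat.eq_or_lt_of_le (Nat.one_le_iff_ne_zero.2 (Nat.succ_ne_zero k)) with h1 | h1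
    · -- k + 1 = 1
      have hk0 : k = 0 := by omega
      subst hk0
      have : (⋃ i ∈ Finset.Icc 1 1, (a i : Set P)) = (a 1 : Set P) := by simp
      rw [this, AffineSubspace.affineSpan_coe]
      exact le_of_eq (ha 1 (by simp)).2
    · have hk1 : 1 ≤ k := by omega
      have hIcc : Finset.Icc 1 (k + 1) = insert (k + 1) (Finset.Icc 1 k) := by
        ext i; simp [Finset.mem_Icc]; omega
      have hun : (⋃ i ∈ Finset.Icc 1 (k + 1), (a i : Set P)) =
          (a (k + 1) : Set P) ∪ (⋃ i ∈ Finset.Icc 1 k, (a i : Set P)) := by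
        rw [hIcc, Finset.set_biUnion_insert]
      have ha' : ∀ i ∈ Finset.Icc 1 k, ALine K (a i) := fun i hi =>
        ha i (by simp only [Finset.mem_Icc] at hi ⊢; omega)
      -- pick points
      obtain ⟨q, hq⟩ := (ha (k + 1) (by simp)).1
      obtain ⟨p, hp⟩ := (ha' 1 (by rw [Finset.mem_Icc]; omega)).1
      have hp' : p ∈ affineSpan K (⋃ i ∈ Finset.Icc 1 k, (a i : Set P)) :=
        subset_affineSpan K _ (Set.mem_biUnion (Finset.mem_Icc.mpr ⟨le_rfl, hk1⟩) hp)
      rw [hun, AffineSubspace.span_union, AffineSubspace.affineSpan_coe,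
        AffineSubspace.direction_sup hq hp']
      have h2 := Submodule.finrank_add_le_finrank_add_finrank
        ((a (k + 1)).direction ⊔ (affineSpan K (⋃ i ∈ Finset.Icc 1 k, (a i : Set P))).direction)
        (Submodule.span K {p -ᵥ q})
      have h3 := Submodule.finrank_add_le_finrank_add_finrank
        (a (k + 1)).direction (affineSpan K (⋃ i ∈ Finset.Icc 1 k, (a i : Set P))).direction
      have h4 := finrank_span_single_le (K := K) (p -ᵥ q)
      have h5 := ih hk1 ha'
      have h6 : Module.finrank K (a (k + 1)).direction = 1 := (ha (k + 1) (by simp)).2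
      omega

/-- If `d ∉ M`, `r ∈ M`, `α ≠ 0`, then `α • d + r ≠ 0`. -/
lemma smul_notin_add_ne_zero {M : Submodule K V} {d r : V} {α : K}
    (hd : d ∉ M) (hr : r ∈ M) (hα : α ≠ 0) : α • d + r ≠ 0 := by
  intro h
  apply hd
  have h' : α • d = -r := eq_neg_of_add_eq_zero_left h
  have hdd : d = α⁻¹ • (α • d) := by rw [smul_smul, inv_mul_cancel₀ hα, one_smul]
  rw [hdd, h']
  exact M.smul_mem _ (M.neg_mem hr)

end Aux

theorem statement12 {K V P : Type*} [DivisionRing K] [AddCommGroup V] [Module K V]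
    [AddTorsor V P] {n m : ℕ} (hn : 3 ≤ n)
    (hK : (3 : Cardinal) ≤ Cardinal.mk K)
    (hdim : Module.finrank K V = n) (hm : m = (n + 1) / 2)
    (a : ℕ → AffineSubspace K P) (ha : ∀ i ∈ Finset.Icc 1 m, ALine K (a i))
    (hindep : Module.finrank K
      (affineSpan K (⋃ i ∈ Finset.Icc 1 m, (a i : Set P))).direction = 2 * m - 1) :
    ∀ P₀ : P, P₀ ∈ affineSpan K (⋃ i ∈ Finset.Icc 1 m, (a i : Set P)) →
      ∃ b₁ b₂ : AffineSubspace K P, ALine K b₁ ∧ ALine K b₂ ∧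
        (∃ p q : P, p ∈ affineSpan K (⋃ i ∈ Finset.Icc 1 (m - 1), (a i : Set P)) ∧
          q ∈ a m ∧ p ≠ q ∧ p ∈ b₁ ∧ q ∈ b₁) ∧
        (∃ q₁ q₂ : P,
          (q₁ ∈ affineSpan K (⋃ i ∈ Finset.Icc 1 (m - 1), (a i : Set P)) ∨ q₁ ∈ a m) ∧
          q₂ ∈ b₁ ∧ q₁ ≠ q₂ ∧ q₁ ∈ b₂ ∧ q₂ ∈ b₂) ∧
        P₀ ∈ b₂ := by
  intro P₀ hP₀
  have hm2 : 2 ≤ m := by omega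
  haveI : FiniteDimensional K V := FiniteDimensional.of_finrank_pos (by omega)
  -- a distinguished scalar c ∉ {0, 1}
  obtain ⟨c, hc0, hc1⟩ : ∃ c : K, c ≠ 0 ∧ c ≠ 1 := by
    by_contra h
    push_neg at h
    have hsub : (Set.univ : Set K) ⊆ {0, 1} := by
      intro cc _
      by_cases h0 : cc = 0
      · exact Set.mem_insert_iff.mpr (Or.inl h0)
      · exact Set.mem_insert_iff.mpr (Or.inr (h cc h0))
    have h2 : Cardinal.mk K ≤ 2 := by
      calc Cardinal.mk K = Cardinal.mk (Set.univ : Set K) := Cardinal.mk_univ.symm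
        _ ≤ Cardinal.mk ({0, 1} : Set K) := Cardinal.mk_le_mk_of_subset hsub
        _ ≤ Cardinal.mk ({1} : Set K) + 1 := Cardinal.mk_insert_le
        _ = 2 := by rw [Cardinal.mk_singleton]; norm_num
    exact absurd (hK.trans h2) (by norm_num)
  -- scalar identity used twice
  have hscal : ∀ s : K, s ≠ 1 → (1 - s)⁻¹ - s * (1 - s)⁻¹ = 1 := by
    intro s h
    have h1 : (1 : K) - s ≠ 0 := sub_ne_zero.mpr (Ne.symm h)
    calc (1 - s)⁻¹ - s * (1 - s)⁻¹ = (1 - s) * (1 - s)⁻¹ := by rw [sub_mul, one_mul]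
      _ = 1 := mul_inv_cancel₀ h1
  set V' := affineSpan K (⋃ i ∈ Finset.Icc 1 (m - 1), (a i : Set P)) with hV'def
  have hIcc : Finset.Icc 1 m = insert m (Finset.Icc 1 (m - 1)) := by
    ext i; simp only [Finset.mem_Icc, Finset.mem_insert]; omega
  have hun : (⋃ i ∈ Finset.Icc 1 m, (a i : Set P)) =
      (⋃ i ∈ Finset.Icc 1 (m - 1), (a i : Set P)) ∪ (a m : Set P) := by
    rw [hIcc, Finset.set_biUnion_insert, Set.union_comm]
  have hU : affineSpan K (⋃ i ∈ Finset.Icc 1 m, (a i : Set P)) = V' ⊔ a m := by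
    rw [hun, AffineSubspace.span_union, AffineSubspace.affineSpan_coe, hV'def]
  obtain ⟨q₀, hq₀⟩ := (ha m (Finset.mem_Icc.mpr ⟨by omega, le_rfl⟩)).1
  obtain ⟨p₁', hp₁'⟩ := (ha 1 (Finset.mem_Icc.mpr ⟨le_rfl, by omega⟩)).1
  have hp₁ : p₁' ∈ V' :=
    subset_affineSpan K _ (Set.mem_biUnion (Finset.mem_Icc.mpr ⟨le_rfl, by omega⟩) hp₁')
  set W := V'.direction with hWdef
  set D := (a m).direction with hDdef
  set d := q₀ -ᵥ p₁' with hd_def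
  have hdirU : (affineSpan K (⋃ i ∈ Finset.Icc 1 m, (a i : Set P))).direction
      = W ⊔ D ⊔ Submodule.span K {d} := by
    rw [hU, AffineSubspace.direction_sup hp₁ hq₀]
  have hWle : Module.finrank K W ≤ 2 * (m - 1) - 1 :=
    finrank_span_lines_le a (m - 1) (by omega)
      (fun i hi => ha i (by simp only [Finset.mem_Icc] at hi ⊢; omega))
  have hD1 : Module.finrank K D = 1 := (ha m (Finset.mem_Icc.mpr ⟨by omega, le_rfl⟩)).2
  have hdmem : d ∉ W ⊔ D := by
    intro hmem
    have hsup : W ⊔ D ⊔ Submodule.span K {d} = W ⊔ D :=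
      sup_eq_left.mpr ((Submodule.span_singleton_le_iff_mem d _).mpr hmem)
    rw [hdirU, hsup] at hindep
    have h3 := Submodule.finrank_add_le_finrank_add_finrank W D
    omega
  have hdist : ∀ p ∈ V', ∀ q ∈ a m, p ≠ q := by
    intro p hp q hq e
    apply hdmem
    have h2 : (q₀ -ᵥ q) + (q -ᵥ p₁') = d := vsub_add_vsub_cancel q₀ q p₁'
    rw [← h2]
    subst e
    exact Submodule.add_mem _
      (Submodule.mem_sup_right (AffineSubspace.vsub_mem_direction hq₀ hq))
      (Submodule.mem_sup_left (AffineSubspace.vsub_mem_direction hp hp₁))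
  -- membership helpers
  have memV' : ∀ v ∈ W, v +ᵥ p₁' ∈ V' := fun v hv =>
    AffineSubspace.vadd_mem_of_mem_direction hv hp₁
  have memam : ∀ v ∈ D, (v + d) +ᵥ p₁' ∈ a m := by
    intro v hv
    rw [hd_def, ← vadd_vadd, vsub_vadd]
    exact AffineSubspace.vadd_mem_of_mem_direction hv hq₀
  -- decompose P₀
  have hP₀d : P₀ -ᵥ p₁' ∈ W ⊔ D ⊔ Submodule.span K {d} := by
    rw [← hdirU]
    refine AffineSubspace.vsub_mem_direction hP₀ ?_
    rw [hU]
    exact (le_sup_left : V' ≤ V' ⊔ a m) hp₁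
  obtain ⟨y, hy, z, hz, hyz⟩ := Submodule.mem_sup.mp hP₀d
  obtain ⟨w, hw, x, hx, hwx⟩ := Submodule.mem_sup.mp hy
  obtain ⟨s, hs⟩ := Submodule.mem_span_singleton.mp hz
  rw [← hwx, ← hs] at hyz
  have hP : P₀ = (w + x + s • d) +ᵥ p₁' := by
    rw [hyz, vsub_vadd]
  clear hyz hwx hs hy hz hP₀d
  rcases eq_or_ne s 0 with hs0 | hs0
  · -- Case B : s = 0
    subst hs0
    rw [zero_smul, add_zero] at hP
    set lam : K := 1 - c⁻¹ with hlam
    have hlam0 : lam ≠ 0 := sub_ne_zero.mpr (fun h => hc1 (inv_eq_one.mp h.symm))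
    set mu : K := 1 - lam⁻¹ with hmu
    set p : P := w +ᵥ p₁' with hp_def
    have hpV : p ∈ V' := memV' w hw
    have hpq₀ : p ≠ q₀ := hdist p hpV q₀ hq₀
    set q₁ : P := (c • x + d) +ᵥ p₁' with hq₁_def
    have hq₁a : q₁ ∈ a m := memam _ (D.smul_mem _ hx)
    set q₂ : P := (mu • (d - w) + w) +ᵥ p₁' with hq₂_def
    have hq0p : q₀ -ᵥ p = d - w := by
      rw [hp_def, vsub_vadd_eq_vsub_sub, hd_def]
    have hq₂eq : q₂ = mu • (q₀ -ᵥ p) +ᵥ p := by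
      rw [hq₂_def, hq0p, hp_def, vadd_vadd]
    have hq₂b : q₂ ∈ affineSpan K ({p, q₀} : Set P) := by
      rw [hq₂eq]
      exact (affineSpan K ({p, q₀} : Set P)).smul_vsub_vadd_mem mu
        (right_mem_affineSpan_pair K p q₀) (left_mem_affineSpan_pair K p q₀)
        (left_mem_affineSpan_pair K p q₀)
    have hmu1 : (1 : K) - mu ≠ 0 := by
      rw [hmu, sub_sub_cancel]; exact inv_ne_zero hlam0
    have hq₁₂ : q₁ ≠ q₂ := by
      intro e
      rw [hq₁_def, hq₂_def] at e
      have he := vadd_right_cancel p₁' e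
      have hz : (1 - mu) • d + (c • x - (1 - mu) • w)
          = (c • x + d) - (mu • (d - w) + w) := by
        simp only [sub_smul, one_smul, smul_sub]; abel
      rw [he, sub_self] at hz
      exact smul_notin_add_ne_zero hdmem
        (Submodule.sub_mem _ (Submodule.mem_sup_right (D.smul_mem c hx))
          (Submodule.mem_sup_left (W.smul_mem _ hw))) hmu1 hz
    have hlm : lam * mu = lam - 1 := by
      rw [hmu, mul_sub, mul_inv_cancel₀ hlam0, mul_one]
    have hlc : lam * c = c - 1 := by
      rw [hlam, sub_mul, one_mul, inv_mul_cancel₀ hc0]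
    have hPeq : P₀ = lam • (q₂ -ᵥ q₁) +ᵥ q₁ := by
      rw [hP, hq₂_def, hq₁_def, vadd_vsub_vadd_cancel_right, vadd_vadd]
      refine congrArg (· +ᵥ p₁') ?_
      simp only [smul_sub, smul_add, smul_smul]
      rw [hlm, hlc]
      simp only [sub_smul, one_smul]
      abel
    have hP₀b₂ : P₀ ∈ affineSpan K ({q₁, q₂} : Set P) := by
      rw [hPeq]
      exact (affineSpan K ({q₁, q₂} : Set P)).smul_vsub_vadd_mem lam
        (right_mem_affineSpan_pair K q₁ q₂) (left_mem_affineSpan_pair K q₁ q₂)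
        (left_mem_affineSpan_pair K q₁ q₂)
    exact ⟨affineSpan K {p, q₀}, affineSpan K {q₁, q₂}, aline_span_pair hpq₀,
      aline_span_pair hq₁₂,
      ⟨p, q₀, hpV, hq₀, hpq₀, left_mem_affineSpan_pair K p q₀,
        right_mem_affineSpan_pair K p q₀⟩,
      ⟨q₁, q₂, Or.inr hq₁a, hq₂b, hq₁₂, left_mem_affineSpan_pair K q₁ q₂,
        right_mem_affineSpan_pair K q₁ q₂⟩, hP₀b₂⟩
  · rcases eq_or_ne s 1 with hs1 | hs1
    · -- Case C : s = 1
      subst hs1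
      rw [one_smul] at hP
      set q : P := (x + d) +ᵥ p₁' with hq_def
      have hqa : q ∈ a m := memam x hx
      have hp₁q : p₁' ≠ q := hdist p₁' hp₁ q hqa
      set q₁ : P := ((1 - c)⁻¹ • w) +ᵥ p₁' with hq₁_def
      have hq₁V : q₁ ∈ V' := memV' _ (W.smul_mem _ hw)
      set q₂ : P := (c⁻¹ • (x + d)) +ᵥ p₁' with hq₂_def
      have hq₂eq : q₂ = c⁻¹ • (q -ᵥ p₁') +ᵥ p₁' := by
        rw [hq₂_def, hq_def, vadd_vsub]
      have hq₂b : q₂ ∈ affineSpan K ({p₁', q} : Set P) := by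
        rw [hq₂eq]
        exact (affineSpan K ({p₁', q} : Set P)).smul_vsub_vadd_mem c⁻¹
          (right_mem_affineSpan_pair K p₁' q) (left_mem_affineSpan_pair K p₁' q)
          (left_mem_affineSpan_pair K p₁' q)
      have hq₁₂ : q₁ ≠ q₂ := by
        intro e
        rw [hq₁_def, hq₂_def] at e
        have he := vadd_right_cancel p₁' e
        have hz : c⁻¹ • d + (c⁻¹ • x - (1 - c)⁻¹ • w)
            = c⁻¹ • (x + d) - (1 - c)⁻¹ • w := by
          rw [smul_add]; abel
        rw [← he, sub_self] at hz
        exact smul_notin_add_ne_zero hdmem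
          (Submodule.sub_mem _ (Submodule.mem_sup_right (D.smul_mem _ hx))
            (Submodule.mem_sup_left (W.smul_mem _ hw))) (inv_ne_zero hc0) hz
      have hPeq : P₀ = c • (q₂ -ᵥ q₁) +ᵥ q₁ := by
        rw [hP, hq₂_def, hq₁_def, vadd_vsub_vadd_cancel_right, vadd_vadd]
        refine congrArg (· +ᵥ p₁') ?_
        simp only [smul_sub, smul_smul, mul_inv_cancel₀ hc0, one_smul]
        rw [show x + d - (c * (1 - c)⁻¹) • w + (1 - c)⁻¹ • w
            = x + d + ((1 - c)⁻¹ • w - (c * (1 - c)⁻¹) • w) from by abel,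
          ← sub_smul, hscal c hc1, one_smul]
        abel
      have hP₀b₂ : P₀ ∈ affineSpan K ({q₁, q₂} : Set P) := by
        rw [hPeq]
        exact (affineSpan K ({q₁, q₂} : Set P)).smul_vsub_vadd_mem c
          (right_mem_affineSpan_pair K q₁ q₂) (left_mem_affineSpan_pair K q₁ q₂)
          (left_mem_affineSpan_pair K q₁ q₂)
      exact ⟨affineSpan K {p₁', q}, affineSpan K {q₁, q₂}, aline_span_pair hp₁q,
        aline_span_pair hq₁₂,
        ⟨p₁', q, hp₁, hqa, hp₁q, left_mem_affineSpan_pair K p₁' q,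
          right_mem_affineSpan_pair K p₁' q⟩,
        ⟨q₁, q₂, Or.inl hq₁V, hq₂b, hq₁₂, left_mem_affineSpan_pair K q₁ q₂,
          right_mem_affineSpan_pair K q₁ q₂⟩, hP₀b₂⟩
    · -- Case A : s ≠ 0, s ≠ 1
      set p : P := ((1 - s)⁻¹ • w) +ᵥ p₁' with hp_def
      set q : P := (s⁻¹ • x + d) +ᵥ p₁' with hq_def
      have hpV : p ∈ V' := memV' _ (W.smul_mem _ hw)
      have hqa : q ∈ a m := memam _ (D.smul_mem _ hx)
      have hpq : p ≠ q := hdist p hpV q hqa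
      have hPeq : P₀ = s • (q -ᵥ p) +ᵥ p := by
        rw [hP, hq_def, hp_def, vadd_vsub_vadd_cancel_right, vadd_vadd]
        refine congrArg (· +ᵥ p₁') ?_
        simp only [smul_sub, smul_add, smul_smul, mul_inv_cancel₀ hs0, one_smul]
        rw [show x + s • d - (s * (1 - s)⁻¹) • w + (1 - s)⁻¹ • w
            = x + s • d + ((1 - s)⁻¹ • w - (s * (1 - s)⁻¹) • w) from by abel,
          ← sub_smul, hscal s hs1, one_smul]
        abel
      have hP₀b : P₀ ∈ affineSpan K ({p, q} : Set P) := by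
        rw [hPeq]
        exact (affineSpan K ({p, q} : Set P)).smul_vsub_vadd_mem s
          (right_mem_affineSpan_pair K p q) (left_mem_affineSpan_pair K p q)
          (left_mem_affineSpan_pair K p q)
      exact ⟨affineSpan K {p, q}, affineSpan K {p, q}, aline_span_pair hpq,
        aline_span_pair hpq,
        ⟨p, q, hpV, hqa, hpq, left_mem_affineSpan_pair K p q,
          right_mem_affineSpan_pair K p q⟩,
        ⟨p, q, Or.inl hpV, right_mem_affineSpan_pair K p q, hpq,
          left_mem_affineSpan_pair K p q, right_mem_affineSpan_pair K p q⟩, hP₀b⟩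
end
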